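/- arXiv:1501.07513 — 5 statements merged into one kernel-verified Lean document; each statement's English description precedes it below -/
import Mathlib

section
/- If two positive roots α, β not in R_P^+ satisfy σ_α W_P = σ_β W_P in W/W_P, then α = β. -/
private lemma stmt8_pigeon {V : Type*} [AddCommGroup V] [Module ℚ V]
    (S : Finset V) (v δ : V) (h : ∀ n : ℕ, v + (n : ℚ) • δ ∈ S) : δ = 0 := by
  obtain ⟨n, m, hnm, he⟩ := Finite.exists_ne_map_eq_of_infinite
    (fun n : ℕ => (⟨v + (n : ℚ) • δ, h n⟩ : {x // x ∈ S}))
  have h1 : (n : ℚ) • δ = (m : ℚ) • δ := by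
    have := congrArg Subtype.val he
    simpa using this
  by_contra hδ
  exact hnm (by exact_mod_cast smul_left_injective ℚ hδ h1)

private lemma stmt8_pair_lin {ι : Type*} [Fintype ι] [DecidableEq ι]
    (pair : (ι → ℚ) → (ι → ℚ) → ℚ)
    (σ : (ι → ℚ) → ((ι → ℚ) ≃ₗ[ℚ] (ι → ℚ)))
    (hσ : ∀ α v, σ α v = v - pair v α • α)
    {z : ι → ℚ} (hz : z ≠ 0) :
    ∃ φ : (ι → ℚ) →ₗ[ℚ] ℚ, ∀ v, pair v z = φ v := by
  obtain ⟨i, hi⟩ : ∃ i, z i ≠ 0 := by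
    by_contra h
    push_neg at h
    exact hz (funext h)
  refine ⟨(z i)⁻¹ • ((LinearMap.proj i).comp
    ((LinearMap.id : (ι → ℚ) →ₗ[ℚ] (ι → ℚ)) - (σ z).toLinearMap)), fun v => ?_⟩
  have h1 : ((LinearMap.id : (ι → ℚ) →ₗ[ℚ] (ι → ℚ)) - (σ z).toLinearMap) v = pair v z • z := by
    simp [hσ z v]
  simp only [LinearMap.smul_apply, LinearMap.comp_apply, h1, LinearMap.proj_apply,
    Pi.smul_apply, smul_eq_mul]
  field_simp

/-- If two positive roots `α, β ∉ R_P⁺` satisfy `σ_α W_P = σ_β W_P` in `W/W_P`, then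
`α = β` (Fulton–Woodward). -/
theorem stmt8 {ι : Type*} [Fintype ι] [DecidableEq ι]
    (Rplus Δ I RP : Finset (ι → ℚ)) (hΔ : Δ ⊆ Rplus) (hI : I ⊆ Δ)
    (pair : (ι → ℚ) → (ι → ℚ) → ℚ)
    (σ : (ι → ℚ) → ((ι → ℚ) ≃ₗ[ℚ] (ι → ℚ)))
    (hσ : ∀ α v, σ α v = v - pair v α • α)
    (h0 : (0 : ι → ℚ) ∉ Rplus)
    (hdisj : ∀ α ∈ Rplus, -α ∉ Rplus)
    (href : ∀ α ∈ Rplus, ∀ β ∈ Rplus, σ α β ∈ Rplus ∨ -(σ α β) ∈ Rplus)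
    (hsimp : ∀ α ∈ Δ, ∀ β ∈ Rplus, β ≠ α → σ α β ∈ Rplus)
    (hpos : ∀ β ∈ Rplus, ∃ c : (ι → ℚ) → ℚ, (∀ a, 0 ≤ c a) ∧ β = ∑ a ∈ Δ, c a • a)
    (hpair2 : ∀ α ∈ Rplus, pair α α = 2)
    (hRP : ∀ β, β ∈ RP ↔ β ∈ Rplus ∧ (β : ι → ℚ) ∈ Submodule.span ℚ (I : Set (ι → ℚ)))
    (α β : ι → ℚ) (hα : α ∈ Rplus \ RP) (hβ : β ∈ Rplus \ RP)
    (hcoset : (σ α)⁻¹ * σ β ∈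
      Subgroup.closure {g : (ι → ℚ) ≃ₗ[ℚ] (ι → ℚ) | ∃ γ ∈ I, g = σ γ}) :
    α = β := by
  classical
  -- nonzero-ness of roots
  have hne : ∀ {x : ι → ℚ}, x ∈ Rplus → x ≠ 0 := fun {x} hx => by
    rintro rfl; exact h0 hx
  -- linearity of `pair` in the first slot
  have hφ : ∀ {z : ι → ℚ}, z ≠ 0 → ∃ φ : (ι → ℚ) →ₗ[ℚ] ℚ, ∀ v, pair v z = φ v :=
    fun hz => stmt8_pair_lin pair σ hσ hz
  have pair_add : ∀ {z : ι → ℚ}, z ≠ 0 → ∀ x y, pair (x + y) z = pair x z + pair y z := by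
    intro z hz x y; obtain ⟨φ, hv⟩ := hφ hz; simp [hv]
  have pair_smul : ∀ {z : ι → ℚ}, z ≠ 0 → ∀ (c : ℚ) x, pair (c • x) z = c * pair x z := by
    intro z hz c x; obtain ⟨φ, hv⟩ := hφ hz; simp [hv]
  have pair_neg : ∀ {z : ι → ℚ}, z ≠ 0 → ∀ x, pair (-x) z = -pair x z := by
    intro z hz x; obtain ⟨φ, hv⟩ := hφ hz; simp [hv]
  have pair_sub : ∀ {z : ι → ℚ}, z ≠ 0 → ∀ x y, pair (x - y) z = pair x z - pair y z := by
    intro z hz x y; obtain ⟨φ, hv⟩ := hφ hz; simp [hv]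
  have pair_sum : ∀ {z : ι → ℚ}, z ≠ 0 → ∀ (s : Finset (ι → ℚ)) (f : (ι → ℚ) → ℚ),
      pair (∑ a ∈ s, f a • a) z = ∑ a ∈ s, f a * pair a z := by
    intro z hz s f; obtain ⟨φ, hv⟩ := hφ hz; simp [hv]
  -- involution
  have invol : ∀ {γ : ι → ℚ}, γ ∈ Rplus → ∀ v, σ γ (σ γ v) = v := by
    intro γ hγ v
    have hγ0 := hne hγ
    rw [hσ, hσ, pair_sub hγ0, pair_smul hγ0, hpair2 γ hγ]
    module
  have inv_sig : ∀ {γ : ι → ℚ}, γ ∈ Rplus → (σ γ)⁻¹ = σ γ := by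
    intro γ hγ
    have : (σ γ).symm = σ γ :=
      LinearEquiv.ext fun v => (σ γ).injective (by rw [LinearEquiv.apply_symm_apply, invol hγ])
    exact this
  have mul_app : ∀ (f g : (ι → ℚ) ≃ₗ[ℚ] (ι → ℚ)) v, (f * g) v = f (g v) := fun _ _ _ => rfl
  set M : Submodule ℚ (ι → ℚ) := Submodule.span ℚ (I : Set (ι → ℚ)) with hMdef
  -- properties of elements of W_P
  have hclos : ∀ w ∈ Subgroup.closure {g : (ι → ℚ) ≃ₗ[ℚ] (ι → ℚ) | ∃ γ ∈ I, g = σ γ},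
      (∀ v, w v - v ∈ M) ∧ (∀ x ∈ Rplus, x ∉ M → w x ∈ Rplus ∧ w x ∉ M) := by
    set P : ((ι → ℚ) ≃ₗ[ℚ] (ι → ℚ)) → Prop := fun w =>
      (∀ v, w v - v ∈ M) ∧ (∀ x ∈ Rplus, x ∉ M → w x ∈ Rplus ∧ w x ∉ M) with hPdef
    have hPmul : ∀ w₁ w₂, P w₁ → P w₂ → P (w₁ * w₂) := by
      rintro w₁ w₂ ⟨h1, h2⟩ ⟨h3, h4⟩
      constructor
      · intro v
        have : (w₁ * w₂) v - v = (w₁ (w₂ v) - w₂ v) + (w₂ v - v) := by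
          rw [mul_app]; abel
        rw [this]
        exact add_mem (h1 _) (h3 _)
      · intro x hx hxM
        obtain ⟨ha, hb⟩ := h4 x hx hxM
        obtain ⟨hc, hd⟩ := h2 _ ha hb
        rw [mul_app]
        exact ⟨hc, hd⟩
    have hgen : ∀ γ ∈ I, P (σ γ) := by
      intro γ hγI
      have hγΔ : γ ∈ Δ := hI hγI
      have hγR : γ ∈ Rplus := hΔ hγΔ
      have hγM : γ ∈ M := Submodule.subset_span hγI
      constructor
      · intro v
        have : σ γ v - v = (-pair v γ) • γ := by rw [hσ]; module
        rw [this]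
        exact Submodule.smul_mem _ _ hγM
      · intro x hx hxM
        have hxγ : x ≠ γ := fun h => hxM (h ▸ hγM)
        refine ⟨hsimp γ hγΔ x hx hxγ, fun hMem => hxM ?_⟩
        have hsub : σ γ x - x ∈ M := by
          have : σ γ x - x = (-pair x γ) • γ := by rw [hσ]; module
          rw [this]; exact Submodule.smul_mem _ _ hγM
        have : x = σ γ x - (σ γ x - x) := by abel
        rw [this]
        exact sub_mem hMem hsub
    intro w hw
    refine (Subgroup.closure_induction (p := fun w _ => P w ∧ P w⁻¹) ?_ ?_ ?_ ?_ hw).1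
    · rintro g ⟨γ, hγI, rfl⟩
      have : (σ γ)⁻¹ = σ γ := inv_sig (hΔ (hI hγI))
      exact ⟨hgen γ hγI, this ▸ hgen γ hγI⟩
    · constructor <;> constructor
      · intro v; simpa using Submodule.zero_mem M
      · intro x hx hxM; exact ⟨hx, hxM⟩
      · intro v; simpa using Submodule.zero_mem M
      · intro x hx hxM; exact ⟨hx, hxM⟩
    · rintro x y _ _ ⟨hx1, hx2⟩ ⟨hy1, hy2⟩
      refine ⟨hPmul _ _ hx1 hy1, ?_⟩
      rw [mul_inv_rev]
      exact hPmul _ _ hy2 hx2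
    · rintro x _ ⟨hx1, hx2⟩
      exact ⟨hx2, by rwa [inv_inv]⟩
  -- basic data about α and β
  obtain ⟨hαR, hαP⟩ := Finset.mem_sdiff.mp hα
  obtain ⟨hβR, hβP⟩ := Finset.mem_sdiff.mp hβ
  have hα0 : α ≠ 0 := hne hαR
  have hβ0 : β ≠ 0 := hne hβR
  have hαM : α ∉ M := fun h => hαP ((hRP α).mpr ⟨hαR, h⟩)
  have hβM : β ∉ M := fun h => hβP ((hRP β).mpr ⟨hβR, h⟩)
  set p : ℚ := pair β α with hpdef
  set q : ℚ := pair α β with hqdef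
  set w : (ι → ℚ) ≃ₗ[ℚ] (ι → ℚ) := (σ α)⁻¹ * σ β with hwdef
  have hwapp : ∀ v, w v = σ α (σ β v) := by
    intro v
    rw [hwdef, mul_app, inv_sig hαR]
  have hwinvapp : ∀ v, w⁻¹ v = σ β (σ α v) := by
    intro v
    rw [hwdef, mul_inv_rev, inv_inv, mul_app, inv_sig hβR]
  have hσββ : σ β β = -β := by
    rw [hσ, hpair2 β hβR]; module
  have hσαα : σ α α = -α := by
    rw [hσ, hpair2 α hαR]; module
  set d1 : ι → ℚ := p • α - (2:ℚ) • β with hd1def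
  set d2 : ι → ℚ := q • β - (2:ℚ) • α with hd2def
  have hwβ : w β = β + d1 := by
    rw [hwapp, hσββ, map_neg, hσ α β, ← hpdef, hd1def]; module
  have hwinvα : w⁻¹ α = α + d2 := by
    rw [hwinvapp, hσαα, map_neg, hσ β α, ← hqdef, hd2def]; module
  have hd1M : d1 ∈ M := by
    have := (hclos w hcoset).1 β
    rw [hwβ] at this
    simpa using this
  have hd2M : d2 ∈ M := by
    have := (hclos w⁻¹ (Subgroup.inv_mem _ hcoset)).1 α
    rw [hwinvα] at this
    simpa using this
  have hpq : q * p = 4 := by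
    have hcomb : (q * p - 4) • α = q • d1 + (2:ℚ) • d2 := by
      rw [hd1def, hd2def]; module
    by_contra hne4
    apply hαM
    have hmem : (q * p - 4) • α ∈ M := by
      rw [hcomb]
      exact add_mem (Submodule.smul_mem _ _ hd1M) (Submodule.smul_mem _ _ hd2M)
    have hc : q * p - 4 ≠ 0 := sub_ne_zero.mpr hne4
    have := Submodule.smul_mem M (q * p - 4)⁻¹ hmem
    rwa [smul_smul, inv_mul_cancel₀ hc, one_smul] at this
  have hwα : w α = (q * p - 1) • α - q • β := by
    rw [hwapp, hσ β α, ← hqdef, map_sub, map_smul, hσαα, hσ α β, ← hpdef]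
    module
  have hwα3 : w α = (3:ℚ) • α - q • β := by
    rw [hwα, hpq]; norm_num
  have hwd1 : w d1 = d1 := by
    rw [hd1def, map_sub, map_smul, map_smul, hwα3, hwβ, hd1def]
    match_scalars <;> linarith [hpq]
  -- the orbit of β under w
  have horb : ∀ n : ℕ, β + (n : ℚ) • d1 ∈ Rplus ∧ β + (n : ℚ) • d1 ∉ M := by
    intro n
    induction n with
    | zero => simpa using ⟨hβR, hβM⟩
    | succ n ih =>
      have hstep : w (β + (n : ℚ) • d1) = β + ((n : ℚ) + 1) • d1 := by
        rw [map_add, map_smul, hwβ, hwd1]; module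
      have := (hclos w hcoset).2 _ ih.1 ih.2
      rw [hstep] at this
      push_cast
      exact this
  have hd10 : d1 = 0 := stmt8_pigeon Rplus β d1 fun n => (horb n).1
  have hpβ : p • α = (2:ℚ) • β := by
    have h1 : p • α - (2:ℚ) • β = 0 := by rw [← hd1def, hd10]
    linear_combination (norm := module) h1
  have hp0 : p ≠ 0 := by
    intro h
    have h1 : (2:ℚ) • β = 0 := by rw [← hpβ, h, zero_smul]
    rcases smul_eq_zero.mp h1 with h2 | h2
    · norm_num at h2
    · exact hβ0 h2
  have hβc : β = (p / 2) • α := by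
    have h1 : (2⁻¹ : ℚ) • (p • α) = (2⁻¹ : ℚ) • ((2:ℚ) • β) := by rw [hpβ]
    rw [smul_smul, smul_smul] at h1
    norm_num at h1
    rw [← h1]
    congr 1
    ring
  -- suppose, for contradiction, that α ≠ β
  by_contra hαβ
  have hc1 : p / 2 ≠ 1 := by
    intro h
    exact hαβ (by rw [hβc, h, one_smul])
  -- the set of all roots (positive and negative)
  set R2 : Finset (ι → ℚ) := Rplus ∪ Rplus.image (fun x => -x) with hR2def
  have hR2mem : ∀ x : ι → ℚ, x ∈ R2 ↔ x ∈ Rplus ∨ -x ∈ Rplus := by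
    intro x
    rw [hR2def, Finset.mem_union, Finset.mem_image]
    constructor
    · rintro (h | ⟨y, hy, rfl⟩)
      · exact Or.inl h
      · exact Or.inr (by simpa using hy)
    · rintro (h | h)
      · exact Or.inl h
      · exact Or.inr ⟨-x, h, by simp⟩
  have hσR2 : ∀ γ ∈ Rplus, ∀ x, x ∈ R2 → σ γ x ∈ R2 := by
    intro γ hγ x hx
    rcases (hR2mem x).mp hx with h | h
    · rcases href γ hγ x h with h1 | h1
      · exact (hR2mem _).mpr (Or.inl h1)
      · exact (hR2mem _).mpr (Or.inr h1)
    · rcases href γ hγ (-x) h with h1 | h1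
      · refine (hR2mem _).mpr (Or.inr ?_)
        rwa [map_neg] at h1
      · refine (hR2mem _).mpr (Or.inl ?_)
        rwa [map_neg, neg_neg] at h1
  set U : Submodule ℚ (ι → ℚ) := Submodule.span ℚ (Rplus : Set (ι → ℚ)) with hUdef
  have hUmem : ∀ x ∈ Rplus, x ∈ U := fun x hx => Submodule.subset_span hx
  -- key lemma: reflections are compatible with `pair` on the span of the roots
  have refl_key : ∀ γ ∈ Rplus, ∀ ρ ∈ Rplus, ∃ ε : ℚ, (ε = 1 ∨ ε = -1) ∧ ε • σ γ ρ ∈ Rplus ∧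
      ∀ v ∈ U, pair (σ γ v) ρ = ε * pair v (ε • σ γ ρ) := by
    intro γ hγ ρ hρ
    have hγ0 := hne hγ
    have hρ0 := hne hρ
    obtain ⟨ε, hεor, hρh⟩ : ∃ ε : ℚ, (ε = 1 ∨ ε = -1) ∧ ε • σ γ ρ ∈ Rplus := by
      rcases href γ hγ ρ hρ with h | h
      · exact ⟨1, Or.inl rfl, by simpa using h⟩
      · exact ⟨-1, Or.inr rfl, by simpa using h⟩
    have hε2 : ε * ε = 1 := by rcases hεor with rfl | rfl <;> norm_num
    refine ⟨ε, hεor, hρh, ?_⟩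
    set ρh : ι → ℚ := ε • σ γ ρ with hρhdef
    have hρhR : ρh ∈ Rplus := hρh
    have hρh0 : ρh ≠ 0 := hne hρhR
    have hσγρh : σ γ ρh = ε • ρ := by
      rw [hρhdef, map_smul, invol hγ]
    have hσγρ : σ γ ρ = ε • ρh := by rw [hρhdef, smul_smul, hε2, one_smul]
    obtain ⟨φ1, hφ1⟩ := hφ hρh0
    obtain ⟨φ2, hφ2⟩ := hφ hρ0
    set L : (ι → ℚ) →ₗ[ℚ] ℚ := φ1 - ε • (φ2.comp (σ γ).toLinearMap) with hLdef
    have hLv : ∀ v, L v = pair v ρh - ε * pair (σ γ v) ρ := by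
      intro v
      rw [hLdef]
      simp [hφ1, hφ2]
    have hcomp : ∀ v, σ γ (σ ρ (σ γ (σ ρh v))) = v + L v • ρh := by
      intro v
      rw [hσ ρh v, map_sub, map_smul, hσγρh,
        hσ ρ (σ γ v - pair v ρh • ε • ρ),
        pair_sub hρ0, pair_smul hρ0, pair_smul hρ0, hpair2 ρ hρ,
        map_sub, map_sub, map_smul, map_smul, map_smul, invol hγ, hσγρ, hLv]
      match_scalars <;> (rcases hεor with rfl | rfl <;> ring)
    have hLρh : L ρh = 0 := by
      rw [hLv, hσγρh, pair_smul hρ0, hpair2 ρ hρ, hpair2 ρh hρhR]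
      rcases hεor with rfl | rfl <;> ring
    have horb2 : ∀ x, x ∈ R2 → ∀ n : ℕ, x + (n : ℚ) • (L x • ρh) ∈ R2 := by
      intro x hx n
      induction n with
      | zero => simpa using hx
      | succ n ih =>
        have hmem := hσR2 γ hγ _ (hσR2 ρ hρ _ (hσR2 γ hγ _ (hσR2 ρh hρhR _ ih)))
        rw [hcomp] at hmem
        have heq : x + (n:ℚ) • (L x • ρh) + L (x + (n:ℚ) • (L x • ρh)) • ρh
            = x + ((n:ℚ)+1) • (L x • ρh) := by
          rw [map_add, map_smul, map_smul, hLρh, smul_zero, smul_zero, add_zero]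
          match_scalars <;> ring
        rw [heq] at hmem
        push_cast
        exact hmem
    have hLzero : ∀ x ∈ Rplus, L x = 0 := by
      intro x hx
      have hz := stmt8_pigeon R2 x (L x • ρh) (horb2 x ((hR2mem x).mpr (Or.inl hx)))
      rcases smul_eq_zero.mp hz with h | h
      · exact h
      · exact absurd h hρh0
    intro v hv
    have hLv0 : L v = 0 := by
      have hsub : (Rplus : Set (ι → ℚ)) ⊆ (LinearMap.ker L : Set (ι → ℚ)) := fun x hx =>
        LinearMap.mem_ker.mpr (hLzero x hx)
      exact LinearMap.mem_ker.mp (Submodule.span_le.mpr hsub hv)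
    have hfin := hLv v
    rw [hLv0] at hfin
    rcases hεor with rfl | rfl <;> linarith [hfin]
  -- the invariant bilinear form
  set Bf : (ι → ℚ) → (ι → ℚ) → ℚ := fun u v => ∑ ρ ∈ Rplus, pair u ρ * pair v ρ with hBfdef
  have hBsym : ∀ x y, Bf x y = Bf y x := by
    intro x y
    simp only [hBfdef]
    exact Finset.sum_congr rfl fun ρ _ => mul_comm _ _
  have hBsub1 : ∀ x y z, Bf (x - y) z = Bf x z - Bf y z := by
    intro x y z
    simp only [hBfdef]
    rw [← Finset.sum_sub_distrib]
    refine Finset.sum_congr rfl fun ρ hρ => ?_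
    rw [pair_sub (hne hρ)]
    ring
  have hBsmul1 : ∀ (c : ℚ) x z, Bf (c • x) z = c * Bf x z := by
    intro c x z
    simp only [hBfdef]
    rw [Finset.mul_sum]
    refine Finset.sum_congr rfl fun ρ hρ => ?_
    rw [pair_smul (hne hρ)]
    ring
  have hBneg1 : ∀ x z, Bf (-x) z = -Bf x z := by
    intro x z
    have h1 : -x = (-1 : ℚ) • x := by module
    rw [h1, hBsmul1]
    ring
  have hBsum2 : ∀ u (f : (ι → ℚ) → ℚ), Bf u (∑ a ∈ Δ, f a • a) = ∑ a ∈ Δ, f a * Bf u a := by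
    intro u f
    simp only [hBfdef]
    have h1 : ∀ ρ ∈ Rplus, pair u ρ * pair (∑ a ∈ Δ, f a • a) ρ
        = ∑ a ∈ Δ, f a * (pair u ρ * pair a ρ) := by
      intro ρ hρ
      rw [pair_sum (hne hρ), Finset.mul_sum]
      exact Finset.sum_congr rfl fun a _ => by ring
    rw [Finset.sum_congr rfl h1, Finset.sum_comm]
    exact Finset.sum_congr rfl fun a _ => by rw [← Finset.mul_sum]
  -- invariance of the form under reflections in roots
  have hINV : ∀ γ ∈ Rplus, ∀ u ∈ U, ∀ v ∈ U, Bf (σ γ u) (σ γ v) = Bf u v := by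
    intro γ hγ u hu v hv
    set g : (ι → ℚ) → (ι → ℚ) := fun ρ => if σ γ ρ ∈ Rplus then σ γ ρ else -(σ γ ρ) with hgdef
    have hg1 : ∀ ρ ∈ Rplus, g ρ ∈ Rplus := by
      intro ρ hρ
      simp only [hgdef]
      by_cases h : σ γ ρ ∈ Rplus
      · rwa [if_pos h]
      · rw [if_neg h]
        rcases href γ hγ ρ hρ with h1 | h1
        · exact absurd h1 h
        · exact h1
    have hgg : ∀ ρ ∈ Rplus, g (g ρ) = ρ := by
      intro ρ hρ
      by_cases h : σ γ ρ ∈ Rplus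
      · simp only [hgdef, if_pos h, invol hγ]
        rw [if_pos hρ]
      · simp only [hgdef, if_neg h, map_neg, invol hγ]
        rw [if_neg (by simpa using hdisj ρ hρ), neg_neg]
    have hterm : ∀ ρ ∈ Rplus, pair (σ γ u) ρ * pair (σ γ v) ρ = pair u (g ρ) * pair v (g ρ) := by
      intro ρ hρ
      obtain ⟨ε, hεor, hεmem, hkey⟩ := refl_key γ hγ ρ hρ
      have hgρ : g ρ = ε • σ γ ρ := by
        rcases hεor with rfl | rfl
        · rw [one_smul] at hεmem ⊢
          simp only [hgdef, if_pos hεmem]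
        · have hmem' : -(σ γ ρ) ∈ Rplus := by rwa [neg_smul, one_smul] at hεmem
          have hnot : σ γ ρ ∉ Rplus := by
            intro h
            exact hdisj (σ γ ρ) h hmem'
          simp only [hgdef, if_neg hnot]
          rw [neg_smul, one_smul]
      rw [hkey u hu, hkey v hv, ← hgρ]
      rcases hεor with rfl | rfl <;> ring
    calc Bf (σ γ u) (σ γ v) = ∑ ρ ∈ Rplus, pair u (g ρ) * pair v (g ρ) := by
          simp only [hBfdef]
          exact Finset.sum_congr rfl hterm
      _ = ∑ ρ ∈ Rplus, pair u ρ * pair v ρ :=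
          Finset.sum_nbij' g g hg1 hg1 hgg hgg fun ρ hρ => rfl
      _ = Bf u v := by simp only [hBfdef]
  have hσρρ : ∀ ρ ∈ Rplus, σ ρ ρ = -ρ := fun ρ hρ => by rw [hσ, hpair2 ρ hρ]; module
  -- pair is recovered from the form
  have hFORM : ∀ ρ ∈ Rplus, ∀ v ∈ U, pair v ρ * Bf ρ ρ = 2 * Bf v ρ := by
    intro ρ hρ v hv
    have h1 := hINV ρ hρ v hv ρ (hUmem ρ hρ)
    rw [hσρρ ρ hρ] at h1
    have h2 : Bf (σ ρ v) (-ρ) = -Bf (σ ρ v) ρ := by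
      rw [hBsym _ (-ρ), hBneg1, hBsym ρ _]
    have h3 : Bf (σ ρ v) ρ = Bf v ρ - pair v ρ * Bf ρ ρ := by
      rw [hσ ρ v, hBsub1, hBsmul1]
    rw [h2, h3] at h1
    linarith
  -- the sum of the positive roots
  set sv : ι → ℚ := ∑ ρ ∈ Rplus, ρ with hsvdef
  have hsvU : sv ∈ U := Submodule.sum_mem _ fun ρ hρ => hUmem ρ hρ
  have hpairs : ∀ a ∈ Δ, pair sv a = 2 := by
    intro a haΔ
    have haR : a ∈ Rplus := hΔ haΔ
    have ha0 := hne haR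
    have hσaa : σ a a = -a := hσρρ a haR
    have h1 : σ a sv = ∑ ρ ∈ Rplus, σ a ρ := by rw [hsvdef]; exact map_sum _ _ _
    have h2 : ∑ ρ ∈ Rplus.erase a, σ a ρ = ∑ ρ ∈ Rplus.erase a, ρ := by
      have hmaps : ∀ ρ ∈ Rplus.erase a, σ a ρ ∈ Rplus.erase a := by
        intro ρ hρe
        obtain ⟨hρa, hρR⟩ := Finset.mem_erase.mp hρe
        refine Finset.mem_erase.mpr ⟨?_, hsimp a haΔ ρ hρR hρa⟩
        intro h
        have h3 := congrArg (σ a) h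
        rw [invol haR, hσaa] at h3
        exact hdisj a haR (h3 ▸ hρR)
      refine Finset.sum_nbij' (fun ρ => σ a ρ) (fun ρ => σ a ρ) hmaps hmaps ?_ ?_ ?_
      · intro ρ _; exact invol haR ρ
      · intro ρ _; exact invol haR ρ
      · intro ρ _; rfl
    have h3 : ∑ ρ ∈ Rplus, σ a ρ = sv - (2:ℚ) • a := by
      rw [← Finset.add_sum_erase _ _ haR, hσaa, h2, Finset.sum_erase_eq_sub haR, ← hsvdef]
      module
    have h4 : sv - pair sv a • a = sv - (2:ℚ) • a := by
      rw [← hσ a sv, h1, h3]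
    have h5 : pair sv a • a = (2:ℚ) • a := by
      linear_combination (norm := module) -h4
    exact smul_left_injective ℚ ha0 h5
  -- positivity facts
  have hB4 : ∀ ρ ∈ Rplus, 4 ≤ Bf ρ ρ := by
    intro ρ hρ
    have h1 : ∀ τ ∈ Rplus, 0 ≤ pair ρ τ * pair ρ τ := fun τ _ => mul_self_nonneg _
    have h2 := Finset.single_le_sum h1 hρ
    rw [hpair2 ρ hρ] at h2
    simp only [hBfdef]
    linarith
  have hBposd : ∀ ρ ∈ Rplus, 0 < Bf ρ ρ := fun ρ hρ => lt_of_lt_of_le (by norm_num) (hB4 ρ hρ)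
  have hBsa : ∀ a ∈ Δ, Bf sv a = Bf a a := by
    intro a ha
    have h1 := hFORM a (hΔ ha) sv hsvU
    rw [hpairs a ha] at h1
    linarith
  have hsvpos : ∀ ρ ∈ Rplus, 0 < Bf sv ρ := by
    intro ρ hρ
    obtain ⟨cf, hcf, hρeq⟩ := hpos ρ hρ
    have h1 : Bf sv ρ = ∑ a ∈ Δ, cf a * Bf sv a := by
      conv_lhs => rw [hρeq]
      exact hBsum2 sv cf
    have hne0 : ∃ a ∈ Δ, 0 < cf a * Bf sv a := by
      by_contra hcon
      push_neg at hcon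
      have hall : ∀ a ∈ Δ, cf a = 0 := by
        intro a ha
        have h2 : 0 ≤ cf a * Bf sv a := by
          rw [hBsa a ha]
          exact mul_nonneg (hcf a) (le_of_lt (hBposd a (hΔ ha)))
        have h4 : cf a * Bf sv a = 0 := le_antisymm (hcon a ha) h2
        rw [hBsa a ha] at h4
        rcases mul_eq_zero.mp h4 with h | h
        · exact h
        · exact absurd h (ne_of_gt (hBposd a (hΔ ha)))
      apply hne hρ
      rw [hρeq]
      exact Finset.sum_eq_zero fun a ha => by rw [hall a ha, zero_smul]
    obtain ⟨a0, ha0Δ, ha0pos⟩ := hne0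
    rw [h1]
    refine Finset.sum_pos' ?_ ⟨a0, ha0Δ, ha0pos⟩
    intro a ha
    rw [hBsa a ha]
    exact mul_nonneg (hcf a) (le_of_lt (hBposd a (hΔ ha)))
  have hexa : ∀ ρ ∈ Rplus, ∃ a ∈ Δ, 0 < pair ρ a := by
    intro ρ hρ
    obtain ⟨cf, hcf, hρeq⟩ := hpos ρ hρ
    have h1 : Bf ρ ρ = ∑ a ∈ Δ, cf a * Bf ρ a := by
      conv_lhs => rw [show Bf ρ ρ = Bf ρ (∑ a ∈ Δ, cf a • a) from by rw [← hρeq]]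
      exact hBsum2 ρ cf
    by_contra hcon
    push_neg at hcon
    have hterm : ∀ a ∈ Δ, cf a * Bf ρ a ≤ 0 := by
      intro a ha
      have h2 := hFORM a (hΔ ha) ρ (hUmem ρ hρ)
      have h3 : 0 ≤ (-(pair ρ a)) * Bf a a :=
        mul_nonneg (neg_nonneg.mpr (hcon a ha)) (le_of_lt (hBposd a (hΔ ha)))
      have hBρa : Bf ρ a ≤ 0 := by linarith
      calc cf a * Bf ρ a ≤ cf a * 0 := mul_le_mul_of_nonneg_left hBρa (hcf a)
        _ = 0 := mul_zero _
    have hsum := Finset.sum_nonpos hterm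
    rw [← h1] at hsum
    linarith [hB4 ρ hρ]
  -- descent to a contradiction
  set T : Finset (ι → ℚ) := Rplus.filter (fun x => ∃ d : ℚ, d ≠ 1 ∧ d • x ∈ Rplus) with hTdef
  have hαT : α ∈ T := by
    rw [hTdef, Finset.mem_filter]
    exact ⟨hαR, p / 2, hc1, by rw [← hβc]; exact hβR⟩
  obtain ⟨ρ, hρT, hρmin⟩ := Finset.exists_min_image T (fun x => Bf sv x) ⟨α, hαT⟩
  rw [hTdef, Finset.mem_filter] at hρT
  obtain ⟨hρR, d, hd1, hdρR⟩ := hρT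
  obtain ⟨a, haΔ, hpa⟩ := hexa ρ hρR
  have haR : a ∈ Rplus := hΔ haΔ
  have ha0 : a ≠ 0 := hne haR
  by_cases hcase1 : ρ = a
  · have hda : d • ρ ≠ ρ := by
      intro h
      apply hd1
      have h1 : (d - 1) • ρ = 0 := by rw [sub_smul, h, one_smul, sub_self]
      rcases smul_eq_zero.mp h1 with h' | h'
      · exact sub_eq_zero.mp h'
      · exact absurd h' (hne hρR)
    have hda' : d • ρ ≠ a := by rw [← hcase1]; exact hda
    have h1 := hsimp a haΔ (d • ρ) hdρR hda'
    have h2 : σ a ρ = -ρ := by rw [hcase1, hσρρ a haR]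
    rw [map_smul, h2, smul_neg] at h1
    exact hdisj (d • ρ) hdρR h1
  · by_cases hcase2 : d • ρ = a
    · have hd0 : d ≠ 0 := by
        intro h
        rw [h, zero_smul] at hcase2
        exact ha0 hcase2.symm
      have hρa : ρ = d⁻¹ • a := by rw [← hcase2, smul_smul, inv_mul_cancel₀ hd0, one_smul]
      have hpaval : pair ρ a = d⁻¹ * 2 := by rw [hρa, pair_smul ha0, hpair2 a haR]
      have h1 := hsimp a haΔ ρ hρR hcase1
      have h2 : σ a ρ = -ρ := by
        rw [hσ a ρ, hpaval, hρa]
        match_scalars <;> ring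
      rw [h2] at h1
      exact hdisj ρ hρR h1
    · have h1 : σ a ρ ∈ Rplus := hsimp a haΔ ρ hρR hcase1
      have h2 : d • σ a ρ ∈ Rplus := by
        rw [← map_smul]
        exact hsimp a haΔ (d • ρ) hdρR hcase2
      have hT' : σ a ρ ∈ T := by
        rw [hTdef, Finset.mem_filter]
        exact ⟨h1, d, hd1, h2⟩
      have hlt : Bf sv (σ a ρ) < Bf sv ρ := by
        have h3 : Bf sv (σ a ρ) = Bf sv ρ - pair ρ a * Bf sv a := by
          rw [hσ a ρ, hBsym sv _, hBsub1, hBsmul1, hBsym ρ sv, hBsym a sv]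
        rw [h3]
        have h4 : 0 < pair ρ a * Bf sv a := mul_pos hpa (hsvpos a haR)
        linarith
      linarith [hρmin _ hT']
end

section
/- For the Grassmannian parabolic in type A_{n-1} with 1 ≤ k ≤ n-1, the rational function C_P = (∑_{1≤r≤k<s≤n} (rs)·Δ) / Δ, where Δ = ∏_{1≤i<j≤k}(x_i - x_j) · ∏_{k+1≤p<q≤n}(x_p - x_q) and (rs) denotes the transposition of variables x_r and x_s acting on Δ, is the constant polynomial min(k, n-k). -/
set_option maxRecDepth 10000


open MvPolynomial

namespace Stmt9Aux

variable {n : ℕ}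

/-- the set of ordered pairs within the "block" `[lo, hi)`. -/
def blkPairs (n lo hi : ℕ) : Finset (Fin n × Fin n) :=
  Finset.univ.filter
    (fun p : Fin n × Fin n => p.1 < p.2 ∧ lo ≤ p.1.val ∧ p.1.val < hi ∧ lo ≤ p.2.val ∧ p.2.val < hi)

lemma mem_blkPairs {lo hi : ℕ} {p : Fin n × Fin n} :
    p ∈ blkPairs n lo hi ↔
      p.1.val < p.2.val ∧ lo ≤ p.1.val ∧ p.1.val < hi ∧ lo ≤ p.2.val ∧ p.2.val < hi := by
  rw [blkPairs, Finset.mem_filter, Fin.lt_def]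
  simp only [Finset.mem_univ, true_and]

/-- the Vandermonde-type product over a block. -/
noncomputable def vprod (n lo hi : ℕ) : MvPolynomial (Fin n) ℚ :=
  ∏ p ∈ blkPairs n lo hi, (X p.1 - X p.2)

lemma rename_vprod (g : Fin n → Fin n) (lo hi : ℕ) :
    rename g (vprod n lo hi) = ∏ p ∈ blkPairs n lo hi, (X (g p.1) - X (g p.2)) := by
  rw [vprod, map_prod]
  simp [rename_X]

/-- a map fixing the block pointwise fixes `vprod`. -/
lemma rename_vprod_fix (g : Fin n → Fin n) (lo hi : ℕ)
    (hg : ∀ x : Fin n, lo ≤ x.val → x.val < hi → g x = x) :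
    rename g (vprod n lo hi) = vprod n lo hi := by
  rw [rename_vprod, vprod]
  refine Finset.prod_congr rfl ?_
  intro p hp
  rw [mem_blkPairs] at hp
  rw [hg p.1 hp.2.1 hp.2.2.1, hg p.2 hp.2.2.2.1 hp.2.2.2.2]

/-- a map identifying two members of the block kills `vprod`. -/
lemma rename_vprod_collapse (g : Fin n → Fin n) (lo hi : ℕ) (a b : Fin n)
    (hab : a.val < b.val) (ha1 : lo ≤ a.val) (ha2 : a.val < hi) (hb1 : lo ≤ b.val)
    (hb2 : b.val < hi) (hg : g a = g b) :
    rename g (vprod n lo hi) = 0 := by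
  rw [rename_vprod]
  refine Finset.prod_eq_zero (i := (a, b)) ?_ ?_
  · rw [mem_blkPairs]; exact ⟨hab, ha1, ha2, hb1, hb2⟩
  · simp [hg]

/-- adjacent swap within block negates `vprod`. -/
lemma swap_val {n : ℕ} (t u z : Fin n) :
    (Equiv.swap t u z).val = if z.val = t.val then u.val else if z.val = u.val then t.val
      else z.val := by
  rcases eq_or_ne z t with rfl | hzt
  · simp [Equiv.swap_apply_left]
  · rcases eq_or_ne z u with rfl | hzu
    · simp [Equiv.swap_apply_right, Fin.val_ne_of_ne hzt]
    · rw [Equiv.swap_apply_of_ne_of_ne hzt hzu,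
        if_neg (fun h => hzt (Fin.ext h)), if_neg (fun h => hzu (Fin.ext h))]

lemma rename_swap_adj {n : ℕ} (lo hi : ℕ) (t u : Fin n) (htu : t.val + 1 = u.val)
    (ht1 : lo ≤ t.val) (ht2 : t.val < hi) (hu1 : lo ≤ u.val) (hu2 : u.val < hi) :
    rename (Equiv.swap t u) (vprod n lo hi) = - vprod n lo hi := by
  have hmem : (t, u) ∈ blkPairs n lo hi := mem_blkPairs.mpr ⟨by show t.val < u.val; omega, ht1, ht2, hu1, hu2⟩
  rw [rename_vprod, vprod, ← Finset.mul_prod_erase _ _ hmem, ← Finset.mul_prod_erase _ _ hmem]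
  have hprod : ∏ p ∈ (blkPairs n lo hi).erase (t, u),
      (X (Equiv.swap t u p.1) - X (Equiv.swap t u p.2) : MvPolynomial (Fin n) ℚ)
      = ∏ p ∈ (blkPairs n lo hi).erase (t, u), (X p.1 - X p.2) := by
    refine Finset.prod_nbij' (fun p => (Equiv.swap t u p.1, Equiv.swap t u p.2))
      (fun p => (Equiv.swap t u p.1, Equiv.swap t u p.2)) ?_ ?_
      (fun p _ => by simp [Equiv.swap_apply_self]) (fun p _ => by simp [Equiv.swap_apply_self])
      (fun p _ => rfl) <;>
    · intro p hp
      rw [Finset.mem_erase] at hp ⊢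
      obtain ⟨hne, hm⟩ := hp
      rw [mem_blkPairs] at hm
      have hne' : ¬(p.1.val = t.val ∧ p.2.val = u.val) := by
        rintro ⟨h1, h2⟩
        exact hne (Prod.ext (Fin.ext h1) (Fin.ext h2))
      constructor
      · rintro h
        rw [Prod.mk.injEq] at h
        have h1 : p.1.val = u.val := by
          have := congrArg Fin.val (congrArg (Equiv.swap t u) h.1)
          rwa [Equiv.swap_apply_self, Equiv.swap_apply_left] at this
        have h2 : p.2.val = t.val := by
          have := congrArg Fin.val (congrArg (Equiv.swap t u) h.2)
          rwa [Equiv.swap_apply_self, Equiv.swap_apply_right] at this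
        omega
      · rw [mem_blkPairs]
        simp only [swap_val]
        split_ifs <;> omega
  rw [hprod, Equiv.swap_apply_left, Equiv.swap_apply_right]
  ring

/-- any swap within block negates `vprod`. -/
lemma swap_decomp {n : ℕ} (i m j : Fin n) (h1 : i.val < m.val) (h2 : m.val < j.val) :
    ⇑(Equiv.swap i j) = ⇑(Equiv.swap i m) ∘ ⇑(Equiv.swap m j) ∘ ⇑(Equiv.swap i m) := by
  have him : i ≠ m := fun h => by rw [h] at h1; omega
  have hmj : m ≠ j := fun h => by rw [h] at h2; omega
  have hij : i ≠ j := fun h => by rw [h] at h1; omega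
  funext x
  simp only [Function.comp_apply]
  rcases eq_or_ne x i with rfl | hxi
  · rw [Equiv.swap_apply_left, Equiv.swap_apply_left, Equiv.swap_apply_left,
      Equiv.swap_apply_of_ne_of_ne hij.symm hmj.symm]
  rcases eq_or_ne x j with rfl | hxj
  · rw [Equiv.swap_apply_right, Equiv.swap_apply_of_ne_of_ne (Ne.symm hij) (Ne.symm hmj),
      Equiv.swap_apply_right, Equiv.swap_apply_right]
  rcases eq_or_ne x m with rfl | hxm
  · rw [Equiv.swap_apply_of_ne_of_ne hxi hxj, Equiv.swap_apply_right,
      Equiv.swap_apply_of_ne_of_ne him hij, Equiv.swap_apply_left]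
  · rw [Equiv.swap_apply_of_ne_of_ne hxi hxj, Equiv.swap_apply_of_ne_of_ne hxi hxm,
      Equiv.swap_apply_of_ne_of_ne hxm hxj, Equiv.swap_apply_of_ne_of_ne hxi hxm]

lemma rename_swap_blk {n : ℕ} (lo hi : ℕ) (i j : Fin n) (hij : i.val < j.val)
    (hi1 : lo ≤ i.val) (hi2 : i.val < hi) (hj1 : lo ≤ j.val) (hj2 : j.val < hi) :
    rename (Equiv.swap i j) (vprod n lo hi) = - vprod n lo hi := by
  suffices H : ∀ d : ℕ, ∀ i j : Fin n, lo ≤ i.val → i.val < hi → lo ≤ j.val → j.val < hi →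
      j.val = i.val + d + 1 → rename (Equiv.swap i j) (vprod n lo hi) = - vprod n lo hi by
    exact H (j.val - i.val - 1) i j hi1 hi2 hj1 hj2 (by omega)
  intro d
  induction d using Nat.strong_induction_on with
  | _ d IH =>
    intro i j hi1 hi2 hj1 hj2 hd
    rcases Nat.eq_zero_or_pos d with rfl | hdpos
    · exact rename_swap_adj lo hi i j (by omega) hi1 hi2 hj1 hj2
    · have hjn : j.val - 1 < n := by omega
      set m : Fin n := ⟨j.val - 1, by omega⟩ with hm
      have him : i.val < m.val := by simp [hm]; omega
      have hmj : m.val < j.val := by simp [hm]; omega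
      have h1 : rename (Equiv.swap i m) (vprod n lo hi) = - vprod n lo hi :=
        IH (d - 1) (by omega) i m hi1 hi2 (by simp [hm]; omega) (by simp [hm]; omega)
          (by simp [hm]; omega)
      have h2 : rename (Equiv.swap m j) (vprod n lo hi) = - vprod n lo hi :=
        IH 0 hdpos m j (by simp [hm]; omega) (by simp [hm]; omega) hj1 hj2 (by simp [hm]; omega)
      have hdec := swap_decomp i m j him hmj
      calc rename (Equiv.swap i j) (vprod n lo hi)
          = rename (⇑(Equiv.swap i m) ∘ ⇑(Equiv.swap m j) ∘ ⇑(Equiv.swap i m))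
              (vprod n lo hi) := by rw [← hdec]
        _ = rename (Equiv.swap i m) (rename (Equiv.swap m j)
              (rename (Equiv.swap i m) (vprod n lo hi))) := by
            rw [rename_rename, rename_rename]; rfl
        _ = - vprod n lo hi := by
            rw [h1, map_neg, h2, map_neg, map_neg, h1]; ring

section Main

/-- the full Vandermonde-type product for the parabolic. -/
noncomputable def Δ (n k : ℕ) : MvPolynomial (Fin n) ℚ := vprod n 0 k * vprod n k n

/-- the cross pairs. -/
def cross (n k : ℕ) : Finset (Fin n × Fin n) :=
  Finset.univ.filter (fun p : Fin n × Fin n => p.1.val < k ∧ k ≤ p.2.val)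

/-- the sum in question. -/
noncomputable def Ssum (n k : ℕ) : MvPolynomial (Fin n) ℚ :=
  ∑ p ∈ cross n k, rename (Equiv.swap p.1 p.2) (Δ n k)

/-- collapsing map. -/
def cmap {n : ℕ} (a b : Fin n) : Fin n → Fin n := fun t => if t = a then b else t

lemma rename_swap_Δ_A {k : ℕ} (a b : Fin n) (hab : a.val < b.val) (hb : b.val < k) :
    rename (Equiv.swap a b) (Δ n k) = - Δ n k := by
  have h1 := rename_swap_blk (n := n) 0 k a b hab (Nat.zero_le _) (hab.trans hb) (Nat.zero_le _) hb
  have h2 := rename_vprod_fix (n := n) (Equiv.swap a b) k n (fun x hx _ => by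
    refine Equiv.swap_apply_of_ne_of_ne ?_ ?_ <;>
      · rintro rfl; omega)
  rw [Δ, map_mul, h1, h2, neg_mul]

lemma rename_swap_Δ_B {k : ℕ} (a b : Fin n) (hab : a.val < b.val) (ha : k ≤ a.val) :
    rename (Equiv.swap a b) (Δ n k) = - Δ n k := by
  have h1 := rename_swap_blk (n := n) k n a b hab ha (by omega) (ha.trans (le_of_lt hab)) b.isLt
  have h2 := rename_vprod_fix (n := n) (Equiv.swap a b) 0 k (fun x _ hx => by
    refine Equiv.swap_apply_of_ne_of_ne ?_ ?_ <;>
      · rintro rfl; omega)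
  rw [Δ, map_mul, h2, h1, mul_neg]

lemma mem_cross {n k : ℕ} {p : Fin n × Fin n} :
    p ∈ cross n k ↔ p.1.val < k ∧ k ≤ p.2.val := by
  rw [cross, Finset.mem_filter]
  simp only [Finset.mem_univ, true_and]

lemma cmap_swap_id {n : ℕ} (a b s : Fin n) (hab : a ≠ b) (hsa : s ≠ a) (hsb : s ≠ b) :
    cmap a b ∘ ⇑(Equiv.swap b s) = (cmap a b ∘ ⇑(Equiv.swap a s)) ∘ ⇑(Equiv.swap a b) := by
  funext x
  simp only [Function.comp_apply, cmap]
  rcases eq_or_ne x a with rfl | hxa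
  · rw [Equiv.swap_apply_of_ne_of_ne hab hsa.symm, Equiv.swap_apply_left,
      Equiv.swap_apply_of_ne_of_ne hab.symm hsb.symm]
    simp [Ne.symm hab]
  rcases eq_or_ne x b with rfl | hxb
  · rw [Equiv.swap_apply_left, Equiv.swap_apply_right, Equiv.swap_apply_left]
  rcases eq_or_ne x s with rfl | hxs
  · rw [Equiv.swap_apply_right, Equiv.swap_apply_of_ne_of_ne hxa hxb, Equiv.swap_apply_right]
    simp
  · rw [Equiv.swap_apply_of_ne_of_ne hxb hxs, Equiv.swap_apply_of_ne_of_ne hxa hxb,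
      Equiv.swap_apply_of_ne_of_ne hxa hxs]

/-- collapsing an in-block pair kills the sum. -/
lemma rename_cmap_Ssum (k : ℕ) {n : ℕ} (a b : Fin n) (hab : a.val < b.val)
    (hblk : b.val < k ∨ k ≤ a.val) :
    rename (cmap a b) (Ssum n k) = 0 := by
  have hab' : a ≠ b := fun h => by rw [h] at hab; omega
  rw [Ssum, map_sum,
    Finset.sum_congr rfl (fun p _ => rename_rename (Equiv.swap p.1 p.2) (cmap a b) (Δ n k))]
  rcases hblk with hbk | hak
  · -- block A case: a < b < k
    have hak : a.val < k := by omega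
    have hkey : ∀ s : Fin n, k ≤ s.val →
        rename (cmap a b ∘ ⇑(Equiv.swap b s)) (Δ n k)
          = - rename (cmap a b ∘ ⇑(Equiv.swap a s)) (Δ n k) := by
      intro s hs
      have hsa : s ≠ a := fun h => by rw [h] at hs; omega
      have hsb : s ≠ b := fun h => by rw [h] at hs; omega
      rw [cmap_swap_id a b s hab' hsa hsb, ← rename_rename, rename_swap_Δ_A a b hab hbk, map_neg]
    have hvan : ∀ p : Fin n × Fin n, p.1.val < k → k ≤ p.2.val → p.1 ≠ a → p.1 ≠ b →
        rename (cmap a b ∘ ⇑(Equiv.swap p.1 p.2)) (Δ n k) = 0 := by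
      intro p h1 h2 hna hnb
      have hca : (cmap a b ∘ ⇑(Equiv.swap p.1 p.2)) a = b := by
        have h3 : Equiv.swap p.1 p.2 a = a :=
          Equiv.swap_apply_of_ne_of_ne (Ne.symm hna) (fun h => by rw [h] at hak; omega)
        simp [cmap, h3]
      have hcb : (cmap a b ∘ ⇑(Equiv.swap p.1 p.2)) b = b := by
        have h3 : Equiv.swap p.1 p.2 b = b :=
          Equiv.swap_apply_of_ne_of_ne (Ne.symm hnb) (fun h => by rw [h] at hbk; omega)
        simp [cmap, h3, hab'.symm]
      rw [Δ, map_mul, rename_vprod_collapse _ 0 k a b hab (Nat.zero_le _) hak (Nat.zero_le _)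
        hbk (hca.trans hcb.symm), zero_mul]
    refine Finset.sum_involution
      (fun p _ => if p.1 = a then (b, p.2) else if p.1 = b then (a, p.2) else p) ?_ ?_ ?_ ?_
    · intro p hp
      rw [mem_cross] at hp
      by_cases h1 : p.1 = a
      · rw [if_pos h1, h1]
        dsimp only
        rw [hkey p.2 hp.2]
        ring
      · by_cases h2 : p.1 = b
        · rw [if_neg h1, if_pos h2, h2]
          dsimp only
          rw [hkey p.2 hp.2]
          ring
        · rw [if_neg h1, if_neg h2, hvan p hp.1 hp.2 h1 h2]
          simp
    · intro p hp hfne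
      rw [mem_cross] at hp
      by_cases h1 : p.1 = a
      · rw [if_pos h1]
        intro hcontra
        exact hab' (((congrArg Prod.fst hcontra).trans h1).symm)
      · by_cases h2 : p.1 = b
        · rw [if_neg h1, if_pos h2]
          intro hcontra
          exact hab' ((congrArg Prod.fst hcontra).trans h2)
        · exact absurd (hvan p hp.1 hp.2 h1 h2) hfne
    · intro p hp
      rw [mem_cross] at hp
      by_cases h1 : p.1 = a
      · rw [if_pos h1, mem_cross]
        exact ⟨hbk, hp.2⟩
      · by_cases h2 : p.1 = b
        · rw [if_neg h1, if_pos h2, mem_cross]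
          exact ⟨hak, hp.2⟩
        · rw [if_neg h1, if_neg h2, mem_cross]
          exact hp
    · intro p hp
      by_cases h1 : p.1 = a
      · rw [if_pos h1]
        dsimp only
        rw [if_neg (Ne.symm hab'), if_pos rfl]
        exact Prod.ext h1.symm rfl
      · by_cases h2 : p.1 = b
        · rw [if_neg h1, if_pos h2]
          dsimp only
          rw [if_pos rfl]
          exact Prod.ext h2.symm rfl
        · rw [if_neg h1, if_neg h2, if_neg h1, if_neg h2]
  · -- block B case: k ≤ a < b
    have hbn : k ≤ b.val := by omega
    have hkey : ∀ r : Fin n, r.val < k →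
        rename (cmap a b ∘ ⇑(Equiv.swap r b)) (Δ n k)
          = - rename (cmap a b ∘ ⇑(Equiv.swap r a)) (Δ n k) := by
      intro r hr
      have hra : r ≠ a := fun h => by rw [h] at hr; omega
      have hrb : r ≠ b := fun h => by rw [h] at hr; omega
      rw [Equiv.swap_comm r b, Equiv.swap_comm r a,
        cmap_swap_id a b r hab' hra hrb, ← rename_rename, rename_swap_Δ_B a b hab hak, map_neg]
    have hvan : ∀ p : Fin n × Fin n, p.1.val < k → k ≤ p.2.val → p.2 ≠ a → p.2 ≠ b →
        rename (cmap a b ∘ ⇑(Equiv.swap p.1 p.2)) (Δ n k) = 0 := by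
      intro p h1 h2 hna hnb
      have hca : (cmap a b ∘ ⇑(Equiv.swap p.1 p.2)) a = b := by
        have h3 : Equiv.swap p.1 p.2 a = a :=
          Equiv.swap_apply_of_ne_of_ne (fun h => by rw [h] at hak; omega) (Ne.symm hna)
        simp [cmap, h3]
      have hcb : (cmap a b ∘ ⇑(Equiv.swap p.1 p.2)) b = b := by
        have h3 : Equiv.swap p.1 p.2 b = b :=
          Equiv.swap_apply_of_ne_of_ne (fun h => by rw [h] at hbn; omega) (Ne.symm hnb)
        simp [cmap, h3, hab'.symm]
      rw [Δ, map_mul, rename_vprod_collapse _ k n a b hab hak a.isLt hbn b.isLt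
        (hca.trans hcb.symm), mul_zero]
    refine Finset.sum_involution
      (fun p _ => if p.2 = a then (p.1, b) else if p.2 = b then (p.1, a) else p) ?_ ?_ ?_ ?_
    · intro p hp
      rw [mem_cross] at hp
      by_cases h1 : p.2 = a
      · rw [if_pos h1, h1]
        dsimp only
        rw [hkey p.1 hp.1]
        ring
      · by_cases h2 : p.2 = b
        · rw [if_neg h1, if_pos h2, h2]
          dsimp only
          rw [hkey p.1 hp.1]
          ring
        · rw [if_neg h1, if_neg h2, hvan p hp.1 hp.2 h1 h2]
          simp
    · intro p hp hfne
      rw [mem_cross] at hp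
      by_cases h1 : p.2 = a
      · rw [if_pos h1]
        intro hcontra
        exact hab' (((congrArg Prod.snd hcontra).trans h1).symm)
      · by_cases h2 : p.2 = b
        · rw [if_neg h1, if_pos h2]
          intro hcontra
          exact hab' ((congrArg Prod.snd hcontra).trans h2)
        · exact absurd (hvan p hp.1 hp.2 h1 h2) hfne
    · intro p hp
      rw [mem_cross] at hp
      by_cases h1 : p.2 = a
      · rw [if_pos h1, mem_cross]
        exact ⟨hp.1, hbn⟩
      · by_cases h2 : p.2 = b
        · rw [if_neg h1, if_pos h2, mem_cross]
          exact ⟨hp.1, hak⟩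
        · rw [if_neg h1, if_neg h2, mem_cross]
          exact hp
    · intro p hp
      by_cases h1 : p.2 = a
      · rw [if_pos h1]
        dsimp only
        rw [if_neg (Ne.symm hab'), if_pos rfl]
        exact Prod.ext rfl h1.symm
      · by_cases h2 : p.2 = b
        · rw [if_neg h1, if_pos h2]
          dsimp only
          rw [if_pos rfl]
          exact Prod.ext rfl h2.symm
        · rw [if_neg h1, if_neg h2, if_neg h1, if_neg h2]

lemma dvd_sub_rename_cmap (a b : Fin n) (F : MvPolynomial (Fin n) ℚ) :
    (X a - X b) ∣ (F - rename (cmap a b) F) := by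
  induction F using MvPolynomial.induction_on with
  | C r => rw [rename_C, sub_self]; exact dvd_zero _
  | add p q hp hq =>
      have : p + q - rename (cmap a b) (p + q)
          = (p - rename (cmap a b) p) + (q - rename (cmap a b) q) := by
        rw [map_add]; ring
      rw [this]; exact dvd_add hp hq
  | mul_X p i hp =>
      have : p * X i - rename (cmap a b) (p * X i)
          = (p - rename (cmap a b) p) * X i
            + rename (cmap a b) p * (X i - X (cmap a b i)) := by
        rw [map_mul, rename_X]; ring
      rw [this]
      refine dvd_add (hp.mul_right _) (Dvd.dvd.mul_left ?_ _)
      by_cases hia : i = a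
      · subst hia; simp [cmap]
      · simp [cmap, hia]

lemma prime_X_sub_X (a b : Fin n) (hab : a ≠ b) :
    Prime (X a - X b : MvPolynomial (Fin n) ℚ) := by
  let e : Fin n ≃ Option {x : Fin n // x ≠ a} := (Equiv.optionSubtypeNe a).symm
  let E : MvPolynomial (Fin n) ℚ ≃ₐ[ℚ] Polynomial (MvPolynomial {x : Fin n // x ≠ a} ℚ) :=
    (renameEquiv ℚ e).trans (optionEquivLeft ℚ _)
  rw [← MulEquiv.prime_iff E.toMulEquiv]
  have h1 : E (X a - X b) = Polynomial.X - Polynomial.C (X ⟨b, fun h => hab h.symm⟩) := by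
    have ea : e a = none := Equiv.optionSubtypeNe_symm_self a
    have eb : e b = some ⟨b, fun h => hab h.symm⟩ :=
      Equiv.optionSubtypeNe_symm_of_ne (fun h => hab h.symm)
    simp only [E, AlgEquiv.trans_apply, map_sub, renameEquiv_apply, rename_X, ea, eb,
      optionEquivLeft_X_none, optionEquivLeft_X_some]
  show Prime (E (X a - X b))
  rw [h1]
  exact Polynomial.prime_X_sub_C _

/-- key divisibility -/
lemma dvd_prod_primes {ι : Type*} [DecidableEq ι] (s : Finset ι)
    (f : ι → MvPolynomial (Fin n) ℚ) (F : MvPolynomial (Fin n) ℚ)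
    (hp : ∀ i ∈ s, Prime (f i)) (hnd : ∀ i ∈ s, ∀ j ∈ s, i ≠ j → ¬ f i ∣ f j)
    (hd : ∀ i ∈ s, f i ∣ F) : (∏ i ∈ s, f i) ∣ F := by
  induction s using Finset.induction_on generalizing F with
  | empty => simpa using one_dvd F
  | insert c s ha ih =>
      obtain ⟨G, hG⟩ := hd c (Finset.mem_insert_self c s)
      have hjG : ∀ j ∈ s, f j ∣ G := by
        intro j hj
        have hjF : f j ∣ f c * G := hG ▸ hd j (Finset.mem_insert_of_mem hj)
        rcases (hp j (Finset.mem_insert_of_mem hj)).2.2 _ _ hjF with h | h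
        · exact absurd h (hnd j (Finset.mem_insert_of_mem hj) c (Finset.mem_insert_self c s)
            (by rintro rfl; exact ha hj))
        · exact h
      have := ih G (fun i hi => hp i (Finset.mem_insert_of_mem hi))
        (fun i hi j hj hij => hnd i (Finset.mem_insert_of_mem hi) j
          (Finset.mem_insert_of_mem hj) hij) hjG
      rw [Finset.prod_insert ha, hG]
      exact mul_dvd_mul_left _ this

lemma eval_ne_zero_of_dvd {F G : MvPolynomial (Fin n) ℚ} (h : F ∣ G)
    (v : Fin n → ℚ) (hG : eval v G ≠ 0) : eval v F ≠ 0 := by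
  obtain ⟨H, rfl⟩ := h
  rw [map_mul] at hG
  exact left_ne_zero_of_mul hG

lemma not_dvd_X_sub_X (p q : Fin n × Fin n) (hp : p.1.val < p.2.val)
    (hq : q.1.val < q.2.val) (hpq : p ≠ q) :
    ¬ ((X p.1 - X p.2 : MvPolynomial (Fin n) ℚ) ∣ (X q.1 - X q.2)) := by
  intro hdvd
  -- find w ∈ {q.1, q.2} with w ∉ {p.1, p.2}
  have hw : ∃ w : Fin n, (w = q.1 ∨ w = q.2) ∧ w ≠ p.1 ∧ w ≠ p.2 := by
    by_cases h1 : q.1 ≠ p.1 ∧ q.1 ≠ p.2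
    · exact ⟨q.1, Or.inl rfl, h1⟩
    by_cases h2 : q.2 ≠ p.1 ∧ q.2 ≠ p.2
    · exact ⟨q.2, Or.inr rfl, h2⟩
    · exfalso
      push_neg at h1 h2
      apply hpq
      have hq1 : q.1 = p.1 ∨ q.1 = p.2 := by tauto
      have hq2 : q.2 = p.1 ∨ q.2 = p.2 := by
        by_cases h : q.2 = p.1
        · exact Or.inl h
        · exact Or.inr (h2 h)
      have : q.1 = p.1 ∧ q.2 = p.2 := by
        rcases hq1 with h | h <;> rcases hq2 with h' | h' <;>
          (first | exact ⟨h, h'⟩ | (exfalso; rw [h, h'] at hq; omega) |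
            (exfalso; rw [h] at hq; rw [h'] at hq; omega))
      exact Prod.ext this.1.symm this.2.symm
  obtain ⟨w, hwq, hw1, hw2⟩ := hw
  set v : Fin n → ℚ := fun t => if t = w then 1 else 0 with hv
  have hGne : eval v (X q.1 - X q.2 : MvPolynomial (Fin n) ℚ) ≠ 0 := by
    have hqq : q.1 ≠ q.2 := by intro h; rw [h] at hq; omega
    rcases hwq with rfl | rfl <;>
      simp_all [v, map_sub, eval_X, Ne.symm hqq]
  have hFz : eval v (X p.1 - X p.2 : MvPolynomial (Fin n) ℚ) = 0 := by
    simp [v, map_sub, eval_X, Ne.symm hw1, Ne.symm hw2]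
  exact eval_ne_zero_of_dvd hdvd v hGne hFz

lemma Δ_eq_prod (n k : ℕ) : Δ n k = ∏ p ∈ blkPairs n 0 k ∪ blkPairs n k n,
    (X p.1 - X p.2 : MvPolynomial (Fin n) ℚ) := by
  have hdisj : Disjoint (blkPairs n 0 k) (blkPairs n k n) := by
    rw [Finset.disjoint_left]
    intro p h1 h2
    rw [mem_blkPairs] at h1 h2
    omega
  rw [Finset.prod_union hdisj, Δ, vprod, vprod]

lemma Δ_dvd_Ssum {n : ℕ} (k : ℕ) : Δ n k ∣ Ssum n k := by
  rw [Δ_eq_prod]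
  refine dvd_prod_primes _ _ _ ?_ ?_ ?_
  · intro p hp
    have := (Finset.mem_union.mp hp)
    refine prime_X_sub_X p.1 p.2 ?_
    rcases this with h | h <;> (rw [mem_blkPairs] at h; exact fun hc => by rw [hc] at h; omega)
  · intro p hp q hq hpq
    refine not_dvd_X_sub_X p q ?_ ?_ hpq <;>
      [rcases Finset.mem_union.mp hp with h | h; rcases Finset.mem_union.mp hq with h | h] <;>
      (rw [mem_blkPairs] at h; exact h.1)
  · intro p hp
    have hcol : rename (cmap p.1 p.2) (Ssum n k) = 0 := by
      rcases Finset.mem_union.mp hp with h | h <;> rw [mem_blkPairs] at h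
      · exact rename_cmap_Ssum k p.1 p.2 h.1 (Or.inl h.2.2.2.2)
      · exact rename_cmap_Ssum k p.1 p.2 h.1 (Or.inr h.2.1)
    have := dvd_sub_rename_cmap (n := n) p.1 p.2 (Ssum n k)
    rwa [hcol, sub_zero] at this


lemma vprod_homog (n lo hi : ℕ) : (vprod n lo hi).IsHomogeneous (blkPairs n lo hi).card := by
  have h := IsHomogeneous.prod (blkPairs n lo hi)
    (fun p => (X p.1 - X p.2 : MvPolynomial (Fin n) ℚ)) (fun _ => 1)
    (fun p _ => (isHomogeneous_X ℚ p.1).sub (isHomogeneous_X ℚ p.2))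
  rw [Finset.sum_const, smul_eq_mul, mul_one] at h
  exact h

lemma Δ_homog (n k : ℕ) :
    (Δ n k).IsHomogeneous ((blkPairs n 0 k).card + (blkPairs n k n).card) :=
  (vprod_homog n 0 k).mul (vprod_homog n k n)

lemma Ssum_homog (n k : ℕ) :
    (Ssum n k).IsHomogeneous ((blkPairs n 0 k).card + (blkPairs n k n).card) :=
  IsHomogeneous.sum _ _ _ (fun p _ => (Δ_homog n k).rename_isHomogeneous)

lemma exists_C {n : ℕ} {D : ℕ} {A S q : MvPolynomial (Fin n) ℚ}
    (hA : A.IsHomogeneous D) (hS : S.IsHomogeneous D) (hA0 : A ≠ 0) (hq : S = A * q) :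
    ∃ c : ℚ, q = C c := by
  have hcomp : ∀ m : ℕ, m ≠ 0 → homogeneousComponent m q = 0 := by
    intro m hm
    have h1 : homogeneousComponent (D + m) S = 0 := by
      rw [homogeneousComponent_of_mem ((mem_homogeneousSubmodule _ _).mpr hS),
        if_neg (show ¬ (D + m = D) by omega)]
    have h2 : A * homogeneousComponent m q = homogeneousComponent (D + m) S := by
      conv_rhs => rw [hq, ← sum_homogeneousComponent q, Finset.mul_sum]
      rw [map_sum,
        Finset.sum_congr rfl (fun i _ => homogeneousComponent_of_mem
          ((mem_homogeneousSubmodule _ _).mpr (hA.mul (homogeneousComponent_isHomogeneous i q)))),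
        Finset.sum_congr rfl (fun i _ => if_congr (by omega : (D + m = D + i) ↔ (m = i)) rfl rfl),
        Finset.sum_ite_eq (Finset.range (q.totalDegree + 1)) m
          (fun i => A * homogeneousComponent i q)]
      by_cases hmem : m ∈ Finset.range (q.totalDegree + 1)
      · rw [if_pos hmem]
      · rw [if_neg hmem, homogeneousComponent_eq_zero, mul_zero]
        rw [Finset.mem_range] at hmem
        omega
    have h3 : A * homogeneousComponent m q = 0 := by rw [h2, h1]
    rcases mul_eq_zero.mp h3 with h | h
    · exact absurd h hA0
    · exact h
  refine ⟨coeff 0 q, ?_⟩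
  conv_lhs => rw [← sum_homogeneousComponent q]
  rw [Finset.sum_eq_single 0 (fun i _ hi => hcomp i hi)
    (fun h => absurd (Finset.mem_range.mpr (Nat.succ_pos _)) h)]
  exact homogeneousComponent_zero q

/-- the special evaluation point -/
noncomputable def vpt (n k : ℕ) : Fin n → ℚ :=
  fun t => if t.val < k then (t.val : ℚ) else (t.val : ℚ) - k

lemma eval_Δ_ne (n k : ℕ) : eval (vpt n k) (Δ n k) ≠ 0 := by
  rw [Δ, map_mul]
  have hA : eval (vpt n k) (vprod n 0 k) ≠ 0 := by
    rw [vprod, map_prod]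
    refine Finset.prod_ne_zero_iff.mpr (fun p hp => ?_)
    rw [mem_blkPairs] at hp
    simp only [map_sub, eval_X, vpt, if_pos hp.2.2.1, if_pos hp.2.2.2.2]
    rw [sub_ne_zero]
    intro h
    have : p.1.val = p.2.val := by exact_mod_cast h
    omega
  have hB : eval (vpt n k) (vprod n k n) ≠ 0 := by
    rw [vprod, map_prod]
    refine Finset.prod_ne_zero_iff.mpr (fun p hp => ?_)
    rw [mem_blkPairs] at hp
    simp only [map_sub, eval_X, vpt, if_neg (by omega : ¬ p.1.val < k),
      if_neg (by omega : ¬ p.2.val < k)]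
    intro h
    have h2 : (p.1.val : ℚ) = p.2.val := by linarith [sub_eq_zero.mp h]
    have : p.1.val = p.2.val := by exact_mod_cast h2
    omega
  exact mul_ne_zero hA hB

lemma eval_term (n k : ℕ) (p : Fin n × Fin n) (hp1 : p.1.val < k) (hp2 : k ≤ p.2.val) :
    eval (vpt n k) (rename (Equiv.swap p.1 p.2) (Δ n k))
      = if p.2.val = k + p.1.val then eval (vpt n k) (Δ n k) else 0 := by
  have hne : p.1 ≠ p.2 := fun h => by rw [h] at hp1; omega
  rw [eval_rename]
  by_cases hcase : p.2.val = k + p.1.val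
  · rw [if_pos hcase]
    have hfun : vpt n k ∘ ⇑(Equiv.swap p.1 p.2) = vpt n k := by
      funext t
      simp only [Function.comp_apply]
      rcases eq_or_ne t p.1 with rfl | h1
      · rw [Equiv.swap_apply_left]
        simp only [vpt, hcase, if_pos hp1]
        rw [if_neg (show ¬ (k + p.1.val < k) by omega)]
        push_cast
        ring
      rcases eq_or_ne t p.2 with rfl | h2
      · rw [Equiv.swap_apply_right]
        simp only [vpt, hcase, if_pos hp1]
        rw [if_neg (show ¬ (k + p.1.val < k) by omega)]
        push_cast
        ring
      · rw [Equiv.swap_apply_of_ne_of_ne h1 h2]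
    rw [hfun]
  · rw [if_neg hcase, Δ, map_mul]
    by_cases hc1 : p.2.val < k + k
    · -- collision inside block A between p.1 and a := p.2 - k
      have han : p.2.val - k < n := by omega
      set a : Fin n := ⟨p.2.val - k, han⟩ with ha
      have hak : a.val < k := by simp [ha]; omega
      have hane1 : a ≠ p.1 := fun h => by
        rw [← h] at hcase
        simp [ha] at hcase
        omega
      have hane2 : a ≠ p.2 := fun h => by
        have := congrArg Fin.val h
        simp [ha] at this
        omega
      have hvals : (vpt n k ∘ ⇑(Equiv.swap p.1 p.2)) a = (vpt n k ∘ ⇑(Equiv.swap p.1 p.2)) p.1 := by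
        simp only [Function.comp_apply, Equiv.swap_apply_left,
          Equiv.swap_apply_of_ne_of_ne hane1 hane2]
        simp only [vpt, if_pos hak, if_neg (show ¬ p.2.val < k by omega)]
        show ((p.2.val - k : ℕ) : ℚ) = (p.2.val : ℚ) - (k : ℚ)
        exact Nat.cast_sub (by omega)
      have hzero : eval (vpt n k ∘ ⇑(Equiv.swap p.1 p.2)) (vprod n 0 k) = 0 := by
        rw [vprod, map_prod]
        rcases lt_or_gt_of_ne (fun h => hane1 (Fin.ext h) : a.val ≠ p.1.val) with hlt | hgt
        · refine Finset.prod_eq_zero (i := (a, p.1)) (mem_blkPairs.mpr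
            ⟨hlt, Nat.zero_le _, hak, Nat.zero_le _, hp1⟩) ?_
          rw [map_sub, eval_X, eval_X, hvals, sub_self]
        · refine Finset.prod_eq_zero (i := (p.1, a)) (mem_blkPairs.mpr
            ⟨hgt, Nat.zero_le _, hp1, Nat.zero_le _, hak⟩) ?_
          rw [map_sub, eval_X, eval_X, hvals, sub_self]
      rw [hzero, zero_mul]
    · -- collision inside block B between p.2 and b := k + p.1
      have hbn : k + p.1.val < n := by omega
      set b : Fin n := ⟨k + p.1.val, hbn⟩ with hb
      have hbk : k ≤ b.val := by simp [hb]
      have hblt : b.val < p.2.val := by simp [hb]; omega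
      have hbne1 : b ≠ p.1 := fun h => by
        have := congrArg Fin.val h
        simp [hb] at this
        omega
      have hbne2 : b ≠ p.2 := fun h => by
        have := congrArg Fin.val h
        simp [hb] at this
        omega
      have hvals : (vpt n k ∘ ⇑(Equiv.swap p.1 p.2)) b = (vpt n k ∘ ⇑(Equiv.swap p.1 p.2)) p.2 := by
        simp only [Function.comp_apply, Equiv.swap_apply_right,
          Equiv.swap_apply_of_ne_of_ne hbne1 hbne2]
        simp only [vpt, if_pos hp1, if_neg (not_lt.mpr hbk)]
        show ((k + p.1.val : ℕ) : ℚ) - (k : ℚ) = (p.1.val : ℚ)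
        push_cast
        ring
      have hzero : eval (vpt n k ∘ ⇑(Equiv.swap p.1 p.2)) (vprod n k n) = 0 := by
        rw [vprod, map_prod]
        refine Finset.prod_eq_zero (i := (b, p.2)) (mem_blkPairs.mpr
          ⟨hblt, hbk, b.isLt, hp2.trans (le_refl _), p.2.isLt⟩) ?_
        rw [map_sub, eval_X, eval_X, hvals, sub_self]
      rw [hzero, mul_zero]

lemma card_diag (n k : ℕ) (hk : 1 ≤ k) (hkn : k ≤ n - 1) (hn : 1 ≤ n) :
    ((cross n k).filter (fun p => p.2.val = k + p.1.val)).card = min k (n - k) := by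
  rw [← Finset.card_range (min k (n - k))]
  refine Finset.card_bij (fun p _ => p.1.val) ?_ ?_ ?_
  · intro p hp
    rw [Finset.mem_filter, mem_cross] at hp
    have := p.2.isLt
    rw [Finset.mem_range]
    omega
  · intro p hp q hq hpq
    rw [Finset.mem_filter, mem_cross] at hp hq
    refine Prod.ext (Fin.ext hpq) (Fin.ext ?_)
    omega
  · intro r hr
    rw [Finset.mem_range] at hr
    have hrn : r < n := by omega
    have hkr : k + r < n := by omega
    refine ⟨(⟨r, hrn⟩, ⟨k + r, hkr⟩), ?_, rfl⟩
    rw [Finset.mem_filter, mem_cross]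
    refine ⟨⟨?_, ?_⟩, rfl⟩
    · simp; omega
    · simp

lemma eval_Ssum (n k : ℕ) (hk : 1 ≤ k) (hkn : k ≤ n - 1) (hn : 1 ≤ n) :
    eval (vpt n k) (Ssum n k) = ((min k (n - k) : ℕ) : ℚ) * eval (vpt n k) (Δ n k) := by
  rw [Ssum, map_sum]
  rw [Finset.sum_congr rfl (fun p hp => eval_term n k p (mem_cross.mp hp).1 (mem_cross.mp hp).2)]
  rw [← Finset.sum_filter, Finset.sum_const, card_diag n k hk hkn hn, nsmul_eq_mul]

end Main

end Stmt9Aux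

/-- For the Grassmannian `Gr(k,n)`: with
`Δ = ∏_{1≤i<j≤k}(x_i - x_j) ∏_{k+1≤p<q≤n}(x_p - x_q)`, the sum `∑_{1≤r≤k<s≤n} (rs)·Δ`
equals `min(k, n-k) · Δ` (indices here are 0-based). -/
theorem stmt9 (n k : ℕ) (hk : 1 ≤ k) (hkn : k ≤ n - 1) (hn : 1 ≤ n) :
    let Δpoly : MvPolynomial (Fin n) ℚ :=
      (∏ p ∈ Finset.univ.filter (fun p : Fin n × Fin n => p.1 < p.2 ∧ p.2.val < k),
        (X p.1 - X p.2)) *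
      (∏ p ∈ Finset.univ.filter (fun p : Fin n × Fin n => p.1 < p.2 ∧ k ≤ p.1.val),
        (X p.1 - X p.2))
    (∑ p ∈ Finset.univ.filter (fun p : Fin n × Fin n => p.1.val < k ∧ k ≤ p.2.val),
        rename (Equiv.swap p.1 p.2) Δpoly)
      = C ((min k (n - k) : ℕ) : ℚ) * Δpoly := by
  intro Δpoly
  have hA : Finset.univ.filter (fun p : Fin n × Fin n => p.1 < p.2 ∧ p.2.val < k)
      = Stmt9Aux.blkPairs n 0 k := by
    refine Finset.ext fun p => ?_
    rw [Finset.mem_filter, Stmt9Aux.mem_blkPairs]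
    have h1 := p.1.isLt
    have h2 := p.2.isLt
    simp only [Finset.mem_univ, true_and, Fin.lt_def]
    omega
  have hB : Finset.univ.filter (fun p : Fin n × Fin n => p.1 < p.2 ∧ k ≤ p.1.val)
      = Stmt9Aux.blkPairs n k n := by
    refine Finset.ext fun p => ?_
    rw [Finset.mem_filter, Stmt9Aux.mem_blkPairs]
    have h1 := p.1.isLt
    have h2 := p.2.isLt
    simp only [Finset.mem_univ, true_and, Fin.lt_def]
    omega
  have hΔ : Δpoly = Stmt9Aux.Δ n k := by
    rw [Stmt9Aux.Δ, Stmt9Aux.vprod, Stmt9Aux.vprod, ← hA, ← hB]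
  rw [hΔ]
  have hS : (∑ p ∈ Finset.univ.filter (fun p : Fin n × Fin n => p.1.val < k ∧ k ≤ p.2.val),
      rename (Equiv.swap p.1 p.2) (Stmt9Aux.Δ n k)) = Stmt9Aux.Ssum n k := rfl
  rw [hS]
  obtain ⟨q, hq⟩ := Stmt9Aux.Δ_dvd_Ssum (n := n) k
  have hne := Stmt9Aux.eval_Δ_ne n k
  have hΔ0 : Stmt9Aux.Δ n k ≠ 0 := fun h => hne (by rw [h, map_zero])
  obtain ⟨c, hc⟩ := Stmt9Aux.exists_C (Stmt9Aux.Δ_homog n k) (Stmt9Aux.Ssum_homog n k) hΔ0 hq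
  rw [hc] at hq
  have he := Stmt9Aux.eval_Ssum n k hk hkn hn
  rw [hq, map_mul, eval_C] at he
  have h2 : eval (Stmt9Aux.vpt n k) (Stmt9Aux.Δ n k) * c
      = eval (Stmt9Aux.vpt n k) (Stmt9Aux.Δ n k) * ((min k (n - k) : ℕ) : ℚ) := by
    rw [he, mul_comm]
  have hcval : c = ((min k (n - k) : ℕ) : ℚ) := mul_left_cancel₀ hne h2
  rw [hq, hcval, mul_comm]
end

section
/- In the graded affine Hecke algebra, the operators on Sym(𝔱*)[ℏ] defined by λ ↦ multiplication by λ and σ_α ↦ (ℏ/α) + ((α-ℏ)/α)·σ_α for simple α satisfy the defining relation: σ̃_α ∘ x_λ - x_{σ_α(λ)} ∘ σ̃_α = ℏ·(α^∨, λ) as operators. -/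
open MvPolynomial

/-- A linear form on the Cartan, as a polynomial in the Cartan variables `some i` and the
extra variable `ℏ = X none`. -/
noncomputable def linO {ι : Type*} [Fintype ι] (v : ι → ℚ) : MvPolynomial (Option ι) ℚ :=
  ∑ i, C (v i) * X (some i)

/-- The reflection `σ_α` (with coroot pairing `cor = (α^∨, ·)`) acting on
`Sym(𝔱*)[ℏ]`, fixing `ℏ`. -/
noncomputable def reflPoly {ι : Type*} [Fintype ι] [DecidableEq ι]
    (cor : (ι → ℚ) →ₗ[ℚ] ℚ) (α : ι → ℚ) :
    MvPolynomial (Option ι) ℚ →ₐ[ℚ] MvPolynomial (Option ι) ℚ :=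
  aeval (fun o => match o with
    | none => X none
    | some i => linO (Pi.single i 1 - cor (Pi.single i 1) • α))

lemma linO_sub_smul {ι : Type*} [Fintype ι] (v w : ι → ℚ) (c : ℚ) :
    linO (v - c • w) = linO v - C c * linO w := by
  simp only [linO, Finset.mul_sum, ← Finset.sum_sub_distrib, Pi.sub_apply, Pi.smul_apply,
    smul_eq_mul, map_sub, map_mul, sub_mul]
  exact Finset.sum_congr rfl fun x _ => by ring

lemma linO_single {ι : Type*} [Fintype ι] [DecidableEq ι] (i : ι) :
    linO (Pi.single i (1:ℚ)) = X (some i) := by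
  rw [linO, Finset.sum_eq_single i]
  · simp
  · intro j _ hj; simp [Pi.single_apply, hj]
  · simp

lemma linO_ne_zero {ι : Type*} [Fintype ι] [DecidableEq ι] {v : ι → ℚ} (hv : v ≠ 0) :
    linO v ≠ 0 := by
  obtain ⟨i, hi⟩ := Function.ne_iff.mp hv
  intro h
  apply hi
  have := congrArg (eval (fun o => if o = some i then (1:ℚ) else 0)) h
  simpa [linO, eval_sum, Finset.sum_ite_eq'] using this

lemma cor_eq_sum {ι : Type*} [Fintype ι] [DecidableEq ι]
    (cor : (ι → ℚ) →ₗ[ℚ] ℚ) (lam : ι → ℚ) :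
    cor lam = ∑ i, lam i * cor (Pi.single i 1) := by
  have h : lam = ∑ i, lam i • (Pi.single i (1:ℚ) : ι → ℚ) := by
    funext j
    simp [Pi.single_apply, Finset.sum_ite_eq']
  conv_lhs => rw [h]
  rw [map_sum]
  exact Finset.sum_congr rfl fun i _ => by rw [map_smul, smul_eq_mul]

lemma reflPoly_linO {ι : Type*} [Fintype ι] [DecidableEq ι]
    (cor : (ι → ℚ) →ₗ[ℚ] ℚ) (α : ι → ℚ) (lam : ι → ℚ) :
    reflPoly cor α (linO lam) = linO (lam - cor lam • α) := by
  have step1 : reflPoly cor α (linO lam)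
      = ∑ i, C (lam i) * (X (some i) - C (cor (Pi.single i 1)) * linO α) := by
    rw [reflPoly, linO, map_sum]
    refine Finset.sum_congr rfl fun i _ => ?_
    simp [linO_sub_smul, linO_single, algebraMap_eq]
  rw [step1, linO_sub_smul, cor_eq_sum cor lam]
  rw [show (linO lam : MvPolynomial (Option ι) ℚ) = ∑ i, C (lam i) * X (some i) from rfl]
  rw [show (C (∑ i, lam i * cor (Pi.single i 1)) : MvPolynomial (Option ι) ℚ)
      = ∑ i, C (lam i) * C (cor (Pi.single i 1)) by
    rw [map_sum]; exact Finset.sum_congr rfl fun i _ => by rw [map_mul]]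
  rw [Finset.sum_mul, ← Finset.sum_sub_distrib]
  exact Finset.sum_congr rfl fun i _ => by ring

/-- The graded affine Hecke algebra relation
`σ̃_α ∘ x_λ - x_{σ_α(λ)} ∘ σ̃_α = ℏ (α^∨, λ)` holds for the operators
`x_λ = multiplication by λ` and `σ̃_α(f) = (ℏ/α) f + ((α-ℏ)/α) σ_α(f)` on (the fraction
field of) `Sym(𝔱*)[ℏ]`. -/
theorem stmt13 {ι : Type*} [Fintype ι] [DecidableEq ι]
    (α : ι → ℚ) (hα0 : α ≠ 0)
    (cor : (ι → ℚ) →ₗ[ℚ] ℚ) (hα2 : cor α = 2)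
    (S : FractionRing (MvPolynomial (Option ι) ℚ) →+* FractionRing (MvPolynomial (Option ι) ℚ))
    (hS : ∀ a : MvPolynomial (Option ι) ℚ,
      S (algebraMap _ (FractionRing (MvPolynomial (Option ι) ℚ)) a)
        = algebraMap _ _ (reflPoly cor α a))
    (lam : ι → ℚ) (f : FractionRing (MvPolynomial (Option ι) ℚ)) :
    let aF := algebraMap (MvPolynomial (Option ι) ℚ) (FractionRing (MvPolynomial (Option ι) ℚ))
    let hb := aF (X none)
    let ap := aF (linO α)
    let act : FractionRing (MvPolynomial (Option ι) ℚ) →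
        FractionRing (MvPolynomial (Option ι) ℚ) :=
      fun g => (hb / ap) * g + ((ap - hb) / ap) * S g
    act (aF (linO lam) * f) - aF (linO (lam - cor lam • α)) * act f
      = hb * aF (C (cor lam)) * f := by
  intro aF hb ap act
  have hap : ap ≠ 0 := fun h =>
    linO_ne_zero hα0 ((injective_iff_map_eq_zero' aF).mp (IsFractionRing.injective _ _) _ |>.mp h)
  have hsub : aF (linO (lam - cor lam • α)) = aF (linO lam) - aF (C (cor lam)) * ap := by
    rw [linO_sub_smul, map_sub, map_mul]
  show (hb / ap) * (aF (linO lam) * f) + ((ap - hb) / ap) * S (aF (linO lam) * f)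
      - aF (linO (lam - cor lam • α)) * ((hb / ap) * f + ((ap - hb) / ap) * S f)
      = hb * aF (C (cor lam)) * f
  rw [map_mul, hS, reflPoly_linO, hsub]
  field_simp
  ring
end

section
/- Let w = σ_{i_1}σ_{i_2}···σ_{i_k} be any (not necessarily reduced) word in simple reflections with product w. Then ∏_{j=1}^{k} (σ_{i_1}···σ_{i_{j-1}}(α_{i_j}) - ℏ)/(σ_{i_1}···σ_{i_j}(α_{i_j}) - ℏ) = ∏_{β ∈ R^+}(β - ℏ) / ∏_{β ∈ R^+}(w(β) - ℏ), as rational functions in the Cartan variables and ℏ. -/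
set_option synthInstance.maxHeartbeats 1000000
open MvPolynomial

noncomputable def fE {ι : Type*} [Fintype ι] (γ : ι → ℚ) :
    FractionRing (MvPolynomial (Option ι) ℚ) :=
  algebraMap (MvPolynomial (Option ι) ℚ) (FractionRing (MvPolynomial (Option ι) ℚ)) (linO γ) -
  algebraMap (MvPolynomial (Option ι) ℚ) (FractionRing (MvPolynomial (Option ι) ℚ)) (X none)

lemma fE_ne {ι : Type*} [Fintype ι] (γ : ι → ℚ) : fE γ ≠ 0 := by
  unfold fE
  rw [← map_sub, map_ne_zero_iff _ (IsFractionRing.injective _ _)]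
  intro h
  have := congrArg (eval fun v => v.elim 1 fun _ => 0) h
  simp [linO] at this

lemma perm_prod {ι : Type*} [Fintype ι] [DecidableEq ι]
    (Rplus : Finset (ι → ℚ)) (σα : (ι → ℚ) ≃ₗ[ℚ] (ι → ℚ)) (α : ι → ℚ)
    (hαR : α ∈ Rplus) (hdisj : -α ∉ Rplus)
    (hsimp : ∀ β ∈ Rplus, β ≠ α → σα β ∈ Rplus)
    (hσαα : σα α = -α) (hinv : ∀ v, σα (σα v) = v)
    {K : Type*} [Field K] (f : (ι → ℚ) → K) :
    f α * ∏ β ∈ Rplus, f (σα β) = f (-α) * ∏ β ∈ Rplus, f β := by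
  rw [← Finset.prod_erase_mul Rplus (fun β => f (σα β)) hαR,
      ← Finset.prod_erase_mul Rplus f hαR, hσαα]
  have hmem : ∀ b ∈ Rplus.erase α, σα b ∈ Rplus.erase α := by
    intro b hb
    rcases Finset.mem_erase.mp hb with ⟨hne, hmem⟩
    refine Finset.mem_erase.mpr ⟨?_, hsimp b hmem hne⟩
    intro h
    apply hdisj
    have hb' : b = -α := by rw [← hσαα, ← h, hinv]
    rwa [← hb']
  have hbij : ∏ β ∈ Rplus.erase α, f (σα β) = ∏ β ∈ Rplus.erase α, f β :=
    Finset.prod_nbij' (fun β => σα β) (fun β => σα β) hmem hmem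
      (fun a _ => hinv a) (fun a _ => hinv a) (fun a _ => rfl)
  rw [hbij]; ring

lemma aux_main {ι : Type*} [Fintype ι] [DecidableEq ι]
    (Rplus Δ : Finset (ι → ℚ)) (hΔ : Δ ⊆ Rplus)
    (σ : (ι → ℚ) → ((ι → ℚ) ≃ₗ[ℚ] (ι → ℚ)))
    (hdisj : ∀ α ∈ Rplus, -α ∉ Rplus)
    (hsimp : ∀ α ∈ Δ, ∀ β ∈ Rplus, β ≠ α → σ α β ∈ Rplus)
    (hσαα : ∀ α ∈ Δ, σ α α = -α)
    (hinv : ∀ α ∈ Δ, ∀ v, σ α (σ α v) = v) :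
    ∀ (m : ℕ) (word : Fin m → (ι → ℚ)), (∀ j, word j ∈ Δ) →
    (∏ j : Fin m,
        fE ((((List.ofFn (fun t : Fin m => σ (word t))).take j.val).prod) (word j)) /
          fE ((((List.ofFn (fun t : Fin m => σ (word t))).take (j.val + 1)).prod) (word j)))
      = (∏ β ∈ Rplus, fE β) /
        (∏ β ∈ Rplus, fE ((((List.ofFn (fun t : Fin m => σ (word t))).take m).prod) β)) := by
  intro m
  induction m with
  | zero =>
    intro word hword
    have h1 : ∀ β : ι → ℚ,
        (((List.ofFn (fun t : Fin 0 => σ (word t))).take 0).prod) β = β := fun β => rfl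
    simp only [h1]
    rw [Finset.univ_eq_empty, Finset.prod_empty,
      div_self (Finset.prod_ne_zero_iff.mpr fun β _ => fE_ne β)]
  | succ m ih =>
    intro word hword
    set α := word (Fin.last m) with hα
    have hαΔ : α ∈ Δ := hword _
    have hαR : α ∈ Rplus := hΔ hαΔ
    set word' : Fin m → (ι → ℚ) := fun j => word j.castSucc with hword'
    have hword'Δ : ∀ j, word' j ∈ Δ := fun j => hword _
    set L : List ((ι → ℚ) ≃ₗ[ℚ] (ι → ℚ)) := List.ofFn fun t : Fin m => σ (word' t) with hL
    have hlen : L.length = m := by simp [hL]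
    have hlist : (List.ofFn fun t : Fin (m+1) => σ (word t)) = L ++ [σ α] := by
      rw [List.ofFn_succ', List.concat_eq_append]
    have hpp_le : ∀ j ≤ m, ((L ++ [σ α]).take j).prod = (L.take j).prod := by
      intro j hj; rw [List.take_append_of_le_length (by omega)]
    have hw : L.take m = L := List.take_of_length_le (by omega)
    have hpp_top : ((L ++ [σ α]).take (m+1)).prod = L.prod * σ α := by
      rw [List.take_of_length_le (by simp [hlen]), List.prod_append, List.prod_singleton]
    rw [hlist, Fin.prod_univ_castSucc]
    have hstep : ∀ j : Fin m,
        fE ((((L ++ [σ α]).take (j.castSucc.val)).prod) (word j.castSucc)) /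
          fE ((((L ++ [σ α]).take (j.castSucc.val + 1)).prod) (word j.castSucc))
        = fE (((L.take j.val).prod) (word' j)) /
          fE (((L.take (j.val + 1)).prod) (word' j)) := by
      intro j
      have hj := j.isLt
      rw [hpp_le _ (by simp only [Fin.coe_castSucc]; omega),
        hpp_le _ (by simp only [Fin.coe_castSucc]; omega)]
      rfl
    rw [Finset.prod_congr rfl (fun j _ => hstep j)]
    have IH := ih word' hword'Δ
    rw [← hL, hw] at IH
    rw [IH]
    have hlast : (Fin.last m).val = m := rfl
    rw [hlast, hpp_le m le_rfl, hw, hpp_top, ← hα]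
    have hmul : ∀ v, (L.prod * σ α) v = L.prod (σ α v) := fun v => rfl
    simp only [hmul]
    have key := perm_prod Rplus (σ α) α hαR (hdisj α hαR)
      (hsimp α hαΔ) (hσαα α hαΔ) (hinv α hαΔ) (fun v => fE (L.prod v))
    have hσA : σ α α = -α := hσαα α hαΔ
    rw [hσA]
    have hQ : (∏ β ∈ Rplus, fE (L.prod β)) ≠ 0 :=
      Finset.prod_ne_zero_iff.mpr fun β _ => fE_ne _
    have hQ' : (∏ β ∈ Rplus, fE (L.prod (σ α β))) ≠ 0 :=
      Finset.prod_ne_zero_iff.mpr fun β _ => fE_ne _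
    have hu' : fE (L.prod (-α)) ≠ 0 := fE_ne _
    rw [div_mul_div_comm, div_eq_div_iff (mul_ne_zero hQ hu') hQ']
    linear_combination (∏ β ∈ Rplus, fE β) * key


/-- For any word `w = σ_{i_1}⋯σ_{i_k}` in simple reflections,
`∏_{j=1}^{k} (σ_{i_1}⋯σ_{i_{j-1}}(α_{i_j}) - ℏ)/(σ_{i_1}⋯σ_{i_j}(α_{i_j}) - ℏ)
 = ∏_{β ∈ R⁺}(β - ℏ) / ∏_{β ∈ R⁺}(w(β) - ℏ)` as rational functions. -/
theorem stmt15 {ι : Type*} [Fintype ι] [DecidableEq ι]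
    (Rplus Δ : Finset (ι → ℚ)) (hΔ : Δ ⊆ Rplus)
    (pair : (ι → ℚ) → (ι → ℚ) → ℚ)
    (σ : (ι → ℚ) → ((ι → ℚ) ≃ₗ[ℚ] (ι → ℚ)))
    (hσ : ∀ α v, σ α v = v - pair v α • α)
    (h0 : (0 : ι → ℚ) ∉ Rplus)
    (hdisj : ∀ α ∈ Rplus, -α ∉ Rplus)
    (href : ∀ α ∈ Rplus, ∀ β ∈ Rplus, σ α β ∈ Rplus ∨ -(σ α β) ∈ Rplus)
    (hsimp : ∀ α ∈ Δ, ∀ β ∈ Rplus, β ≠ α → σ α β ∈ Rplus)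
    (hpos : ∀ β ∈ Rplus, ∃ c : (ι → ℚ) → ℚ, (∀ a, 0 ≤ c a) ∧ β = ∑ a ∈ Δ, c a • a)
    (hpair2 : ∀ α ∈ Rplus, pair α α = 2)
    (m : ℕ) (word : Fin m → (ι → ℚ)) (hword : ∀ j, word j ∈ Δ) :
    let pp : ℕ → ((ι → ℚ) ≃ₗ[ℚ] (ι → ℚ)) :=
      fun j => ((List.ofFn (fun t : Fin m => σ (word t))).take j).prod
    let aF := algebraMap (MvPolynomial (Option ι) ℚ) (FractionRing (MvPolynomial (Option ι) ℚ))
    let hb := aF (X none)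
    (∏ j : Fin m,
        (aF (linO ((pp j.val) (word j))) - hb) / (aF (linO ((pp (j.val + 1)) (word j))) - hb))
      = (∏ β ∈ Rplus, (aF (linO β) - hb)) / (∏ β ∈ Rplus, (aF (linO ((pp m) β)) - hb)) := by
  intro pp aF hb
  have hσαα : ∀ α ∈ Δ, σ α α = -α := by
    intro α hα
    rw [hσ, hpair2 α (hΔ hα)]
    module
  have hinv : ∀ α ∈ Δ, ∀ v, σ α (σ α v) = v := by
    intro α hα v
    conv_lhs => rw [hσ α v]
    rw [map_sub, map_smul, hσαα α hα, hσ α v]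
    module
  exact aux_main Rplus Δ hΔ σ hdisj hsimp hσαα hinv m word hword
end

section
/- In type A with G/P = Gr(k,n): the coefficient of the monomial x_2 x_3^2 ··· x_k^{k-1} · x_{k+2} x_{k+3}^2 ··· x_n^{n-k-1} in ∑_{1≤r≤k<s≤n} (rs)·(∏_{1≤i<j≤k}(x_j - x_i) ∏_{k+1≤p<q≤n}(x_q - x_p)) equals min(k, n-k); specifically, the transposition (rs) contributes 1 to this coefficient if s - r = k and 0 otherwise. -/
open MvPolynomial

namespace Stmt19Aux

variable {n : ℕ}

/-- exponent finsupp of the monomial attached to a permutation -/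
noncomputable def mon {m : ℕ} (f : Fin m → Fin n) (σ : Equiv.Perm (Fin m)) : Fin n →₀ ℕ :=
  ∑ j : Fin m, Finsupp.single (f j) ((σ.symm j : Fin m) : ℕ)

lemma mon_apply {m : ℕ} (f : Fin m → Fin n) (hf : Function.Injective f)
    (σ : Equiv.Perm (Fin m)) (p : Fin m) :
    mon f σ (f p) = ((σ.symm p : Fin m) : ℕ) := by
  rw [mon, Finsupp.finset_sum_apply]
  rw [Finset.sum_eq_single p]
  · simp
  · intro j _ hj
    rw [Finsupp.single_apply, if_neg (fun h => hj (hf h))]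
  · simp

lemma mon_apply_ne {m : ℕ} (f : Fin m → Fin n) (σ : Equiv.Perm (Fin m)) (x : Fin n)
    (hx : ∀ j, f j ≠ x) : mon f σ x = 0 := by
  rw [mon, Finsupp.finset_sum_apply]
  refine Finset.sum_eq_zero fun j _ => ?_
  rw [Finsupp.single_apply, if_neg (hx j)]

lemma prod_monomial {ι : Type*} (s : Finset ι) (g : ι → (Fin n →₀ ℕ)) :
    (∏ i ∈ s, (monomial (g i) (1 : ℤ) : MvPolynomial (Fin n) ℤ))
      = monomial (∑ i ∈ s, g i) 1 := by
  induction s using Finset.cons_induction with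
  | empty => simp
  | cons a s ha ih => rw [Finset.prod_cons, Finset.sum_cons, ih, monomial_mul, one_mul]

lemma vander_expand {m : ℕ} (f : Fin m → Fin n) (hf : Function.Injective f) :
    (∏ i : Fin m, ∏ j ∈ Finset.Ioi i, (X (f j) - X (f i)) : MvPolynomial (Fin n) ℤ)
    = ∑ σ : Equiv.Perm (Fin m), monomial (mon f σ) ((Equiv.Perm.sign σ : ℤ)) := by
  rw [← Matrix.det_vandermonde (fun i : Fin m => (X (f i) : MvPolynomial (Fin n) ℤ)),
    Matrix.det_apply]
  refine Finset.sum_congr rfl fun σ _ => ?_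
  have h1 : (∏ i : Fin m, Matrix.vandermonde (fun i => (X (f i) : MvPolynomial (Fin n) ℤ)) (σ i) i)
      = monomial (mon f σ) 1 := by
    simp only [Matrix.vandermonde_apply, X_pow_eq_monomial]
    rw [prod_monomial]
    have hsum : (∑ i : Fin m, Finsupp.single (f (σ i)) ((i : Fin m) : ℕ)) = mon f σ :=
      Fintype.sum_equiv σ (fun i => Finsupp.single (f (σ i)) ((i : Fin m) : ℕ))
        (fun j => Finsupp.single (f j) ((σ.symm j : Fin m) : ℕ)) (fun i => by simp)
    rw [hsum]
  rw [h1, Units.smul_def, smul_monomial, smul_eq_mul, mul_one]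

end Stmt19Aux

open Stmt19Aux

section Main

variable (n k : ℕ) (h : k < n)

def f1 : Fin k → Fin n := fun i => ⟨i, lt_trans i.2 h⟩

def f2 : Fin (n - k) → Fin n := fun i => ⟨k + i, by have := i.2; omega⟩

lemma f1_inj : Function.Injective (f1 n k h) := by
  intro a b hab
  simpa [f1, Fin.ext_iff] using hab

lemma f2_inj : Function.Injective (f2 n k h) := by
  intro a b hab
  simp only [f2, Fin.ext_iff] at hab ⊢
  omega

lemma V1_eq :
    (∏ p ∈ Finset.univ.filter (fun p : Fin n × Fin n => p.1 < p.2 ∧ p.2.val < k),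
        (X p.2 - X p.1) : MvPolynomial (Fin n) ℤ)
    = ∑ σ : Equiv.Perm (Fin k), monomial (mon (f1 n k h) σ) ((Equiv.Perm.sign σ : ℤ)) := by
  rw [← vander_expand (f1 n k h) (f1_inj n k h), Finset.prod_sigma']
  refine Finset.prod_bij'
    (fun p hp => (⟨⟨p.1.val, by simp only [Finset.mem_filter] at hp; omega⟩,
      ⟨p.2.val, by simp only [Finset.mem_filter] at hp; exact hp.2.2⟩⟩ :
        Σ _ : Fin k, Fin k))
    (fun q _ => (f1 n k h q.1, f1 n k h q.2)) ?_ ?_ ?_ ?_ ?_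
  · intro p hp
    simp only [Finset.mem_filter, Finset.mem_univ, true_and] at hp
    simp only [Finset.mem_sigma, Finset.mem_univ, Finset.mem_Ioi, true_and]
    exact hp.1
  · intro q hq
    simp only [Finset.mem_sigma, Finset.mem_univ, Finset.mem_Ioi, true_and] at hq
    simp only [Finset.mem_filter, Finset.mem_univ, true_and, f1]
    exact ⟨hq, q.2.2⟩
  · intro p hp
    simp [f1]
  · intro q hq
    rfl
  · intro p hp
    rfl

lemma V2_eq :
    (∏ p ∈ Finset.univ.filter (fun p : Fin n × Fin n => p.1 < p.2 ∧ k ≤ p.1.val),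
        (X p.2 - X p.1) : MvPolynomial (Fin n) ℤ)
    = ∑ τ : Equiv.Perm (Fin (n - k)), monomial (mon (f2 n k h) τ) ((Equiv.Perm.sign τ : ℤ)) := by
  rw [← vander_expand (f2 n k h) (f2_inj n k h), Finset.prod_sigma']
  refine Finset.prod_bij'
    (fun p hp => (⟨⟨p.1.val - k, by
        simp only [Finset.mem_filter] at hp
        have := p.2.2; have := p.1.2
        have h12 : p.1.val < p.2.val := hp.2.1
        omega⟩,
      ⟨p.2.val - k, by have := p.2.2; omega⟩⟩ : Σ _ : Fin (n - k), Fin (n - k)))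
    (fun q _ => (f2 n k h q.1, f2 n k h q.2)) ?_ ?_ ?_ ?_ ?_
  · intro p hp
    simp only [Finset.mem_filter, Finset.mem_univ, true_and] at hp
    simp only [Finset.mem_sigma, Finset.mem_univ, Finset.mem_Ioi, true_and]
    have h12 : p.1.val < p.2.val := hp.1
    simp only [Fin.mk_lt_mk]
    omega
  · intro q hq
    simp only [Finset.mem_sigma, Finset.mem_univ, Finset.mem_Ioi, true_and] at hq
    simp only [Finset.mem_filter, Finset.mem_univ, true_and, f2]
    constructor
    · simp only [Fin.mk_lt_mk]
      omega
    · simp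
  · intro p hp
    simp only [Finset.mem_filter, Finset.mem_univ, true_and] at hp
    have h1 : k ≤ p.1.val := hp.2
    have h2 : k ≤ p.2.val := le_trans h1 (le_of_lt hp.1)
    simp only [f2, Prod.ext_iff, Fin.ext_iff]
    omega
  · intro q hq
    obtain ⟨a, b⟩ := q
    simp only [f2, Sigma.ext_iff, heq_eq_eq, Fin.ext_iff, Fin.val_mk]
    omega
  · intro p hp
    simp only [Finset.mem_filter, Finset.mem_univ, true_and] at hp
    obtain ⟨hlt, hk1⟩ := hp
    have hk2 : k ≤ p.2.val := le_trans hk1 (le_of_lt hlt)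
    have e1 : p.1 = f2 n k h ⟨p.1.val - k, by have := p.1.2; omega⟩ :=
      Fin.ext (by simp only [f2, Fin.val_mk]; omega)
    have e2 : p.2 = f2 n k h ⟨p.2.val - k, by have := p.2.2; omega⟩ :=
      Fin.ext (by simp only [f2, Fin.val_mk]; omega)
    conv_lhs => rw [e1, e2]

lemma coeff_delta (e : Fin n →₀ ℕ) :
    coeff e ((∏ p ∈ Finset.univ.filter (fun p : Fin n × Fin n => p.1 < p.2 ∧ p.2.val < k),
        (X p.2 - X p.1)) *
      (∏ p ∈ Finset.univ.filter (fun p : Fin n × Fin n => p.1 < p.2 ∧ k ≤ p.1.val),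
        (X p.2 - X p.1)) : MvPolynomial (Fin n) ℤ)
    = ∑ σ : Equiv.Perm (Fin k), ∑ τ : Equiv.Perm (Fin (n - k)),
        if mon (f1 n k h) σ + mon (f2 n k h) τ = e
          then ((Equiv.Perm.sign σ : ℤ) * (Equiv.Perm.sign τ : ℤ)) else 0 := by
  rw [V1_eq n k h, V2_eq n k h, Finset.sum_mul_sum]
  rw [coeff_sum]
  refine Finset.sum_congr rfl fun σ _ => ?_
  rw [coeff_sum]
  refine Finset.sum_congr rfl fun τ _ => ?_
  rw [monomial_mul, coeff_monomial]

lemma cond_iff (e : Fin n →₀ ℕ) (σ : Equiv.Perm (Fin k)) (τ : Equiv.Perm (Fin (n - k))) :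
    mon (f1 n k h) σ + mon (f2 n k h) τ = e ↔
      ((∀ p : Fin k, ((σ.symm p : Fin k) : ℕ) = e (f1 n k h p)) ∧
       (∀ p : Fin (n - k), ((τ.symm p : Fin (n - k)) : ℕ) = e (f2 n k h p))) := by
  have hne1 : ∀ (p : Fin k) (j : Fin (n - k)), f2 n k h j ≠ f1 n k h p := by
    intro p j
    simp only [f1, f2, Fin.ext_iff, ne_eq]
    have := p.2
    omega
  have hne2 : ∀ (p : Fin (n - k)) (j : Fin k), f1 n k h j ≠ f2 n k h p := by
    intro p j
    simp only [f1, f2, Fin.ext_iff, ne_eq]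
    have := j.2
    omega
  constructor
  · intro hE
    constructor
    · intro p
      have := DFunLike.congr_fun hE (f1 n k h p)
      rwa [Finsupp.add_apply, mon_apply _ (f1_inj n k h),
        mon_apply_ne _ _ _ (hne1 p), add_zero] at this
    · intro p
      have := DFunLike.congr_fun hE (f2 n k h p)
      rwa [Finsupp.add_apply, mon_apply _ (f2_inj n k h),
        mon_apply_ne _ _ _ (hne2 p), zero_add] at this
  · rintro ⟨h1, h2⟩
    ext x
    rw [Finsupp.add_apply]
    by_cases hx : x.val < k
    · have hx1 : x = f1 n k h ⟨x.val, hx⟩ := Fin.ext rfl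
      rw [hx1, mon_apply _ (f1_inj n k h), mon_apply_ne _ _ _ (hne1 _), add_zero, h1]
    · have hx2 : x = f2 n k h ⟨x.val - k, by have := x.2; omega⟩ :=
        Fin.ext (by simp [f2]; omega)
      rw [hx2, mon_apply _ (f2_inj n k h), mon_apply_ne _ _ _ (hne2 _), zero_add, h2]

end Main

/-- For `Gr(k,n)`: the coefficient of `x_2 x_3^2 ⋯ x_k^{k-1} · x_{k+2} x_{k+3}^2 ⋯ x_n^{n-k-1}`
in `∑_{1≤r≤k<s≤n} (rs)·(∏_{1≤i<j≤k}(x_j - x_i) ∏_{k+1≤p<q≤n}(x_q - x_p))` equals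
`min(k, n-k)`; moreover `(rs)` contributes `1` to this coefficient if `s - r = k` and `0`
otherwise (indices 0-based, so the exponent of `x_i` is `i` for `i < k` and `i - k`
otherwise). -/
theorem stmt19 (n k : ℕ) (hk : 1 ≤ k) (hkn : k ≤ n - 1) (hn : 1 ≤ n) :
    let Δpoly : MvPolynomial (Fin n) ℤ :=
      (∏ p ∈ Finset.univ.filter (fun p : Fin n × Fin n => p.1 < p.2 ∧ p.2.val < k),
        (X p.2 - X p.1)) *
      (∏ p ∈ Finset.univ.filter (fun p : Fin n × Fin n => p.1 < p.2 ∧ k ≤ p.1.val),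
        (X p.2 - X p.1))
    let d : Fin n →₀ ℕ :=
      Finsupp.equivFunOnFinite.symm (fun i => if i.val < k then i.val else i.val - k)
    (∀ r s : Fin n, r.val < k → k ≤ s.val →
        coeff d (rename (Equiv.swap r s) Δpoly) = if s.val - r.val = k then 1 else 0) ∧
    coeff d (∑ p ∈ Finset.univ.filter (fun p : Fin n × Fin n => p.1.val < k ∧ k ≤ p.2.val),
        rename (Equiv.swap p.1 p.2) Δpoly) = ((min k (n - k) : ℕ) : ℤ) := by
  intro Δpoly d
  have hkn' : k < n := by omega
  have hd_apply : ∀ x : Fin n, d x = if x.val < k then x.val else x.val - k := by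
    intro x
    simp [d, Finsupp.coe_equivFunOnFinite_symm]
  have main : ∀ r s : Fin n, r.val < k → k ≤ s.val →
      coeff d (rename (Equiv.swap r s) Δpoly) = if s.val - r.val = k then 1 else 0 := by
    intro r s hr hs
    set e := Finsupp.mapDomain (Equiv.swap r s) d with he
    have he_apply : ∀ x : Fin n, e x = d (Equiv.swap r s x) := by
      intro x
      rw [he, Finsupp.mapDomain_equiv_apply, Equiv.symm_swap]
    have hco : coeff d (rename (Equiv.swap r s) Δpoly) = coeff e Δpoly := by
      have hcomp : (⇑(Equiv.swap r s) ∘ ⇑(Equiv.swap r s)) = id :=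
        funext fun x => Equiv.swap_apply_self r s x
      have hd : d = Finsupp.mapDomain (⇑(Equiv.swap r s)) e := by
        rw [he, ← Finsupp.mapDomain_comp, hcomp, Finsupp.mapDomain_id]
      conv_lhs => rw [hd]
      exact coeff_rename_mapDomain _ (Equiv.injective _) _ _
    rw [hco]
    show coeff e ((∏ p ∈ Finset.univ.filter
        (fun p : Fin n × Fin n => p.1 < p.2 ∧ p.2.val < k), (X p.2 - X p.1)) *
      (∏ p ∈ Finset.univ.filter
        (fun p : Fin n × Fin n => p.1 < p.2 ∧ k ≤ p.1.val), (X p.2 - X p.1)))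
      = if s.val - r.val = k then 1 else 0
    rw [coeff_delta n k hkn' e]
    have hrs : r ≠ s := by
      intro hrseq
      rw [hrseq] at hr
      omega
    by_cases hsr : s.val - r.val = k
    · -- here e = d and the only contributing pair is (1, 1)
      have hed : e = d := by
        ext x
        rw [he_apply]
        rcases eq_or_ne x r with hxr | hxr
        · rw [hxr, Equiv.swap_apply_left, hd_apply, hd_apply,
            if_neg (by omega : ¬ s.val < k), if_pos hr]
          omega
        · rcases eq_or_ne x s with hxs | hxs
          · rw [hxs, Equiv.swap_apply_right, hd_apply, hd_apply,
              if_pos hr, if_neg (by omega : ¬ s.val < k)]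
            omega
          · rw [Equiv.swap_apply_of_ne_of_ne hxr hxs]
      have key : ∀ (σ : Equiv.Perm (Fin k)) (τ : Equiv.Perm (Fin (n - k))),
          (mon (f1 n k hkn') σ + mon (f2 n k hkn') τ = e) ↔ (σ = 1 ∧ τ = 1) := by
        intro σ τ
        rw [cond_iff n k hkn' e σ τ, hed]
        constructor
        · rintro ⟨h1, h2⟩
          constructor
          · have : σ.symm = 1 := by
              ext p
              have := h1 p
              rw [hd_apply] at this
              simp only [f1] at this
              simp only [p.2, ↓reduceIte] at this
              simpa [Fin.ext_iff] using this
            have : σ = (1 : Equiv.Perm (Fin k)).symm := by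
              rw [← this]; exact σ.symm_symm.symm
            simpa [Equiv.Perm.one_symm] using this
          · have : τ.symm = 1 := by
              ext p
              have := h2 p
              rw [hd_apply] at this
              simp only [f2] at this
              simp only [show ¬ k + p.val < k by omega, ↓reduceIte] at this
              have hv : (τ.symm p : Fin (n - k)).val = p.val := by omega
              simpa [Fin.ext_iff] using hv
            have : τ = (1 : Equiv.Perm (Fin (n - k))).symm := by
              rw [← this]; exact τ.symm_symm.symm
            simpa [Equiv.Perm.one_symm] using this
        · rintro ⟨rfl, rfl⟩
          constructor
          · intro p
            rw [hd_apply]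
            simp only [f1]
            simp only [p.2, ↓reduceIte]
            simp [Equiv.Perm.one_symm]
          · intro p
            rw [hd_apply]
            simp only [f2]
            simp only [show ¬ k + p.val < k by omega, ↓reduceIte]
            simp [Equiv.Perm.one_symm]
      rw [if_pos hsr]
      simp only [key, ite_and]
      rw [Finset.sum_eq_single 1]
      · rw [Finset.sum_eq_single 1]
        · simp
        · intro τ _ hτ
          rw [if_pos rfl, if_neg hτ]
        · simp
      · intro σ _ hσ
        exact Finset.sum_eq_zero fun τ _ => by rw [if_neg hσ]
      · simp
    · -- no contributing pair
      have key0 : ∀ (σ : Equiv.Perm (Fin k)) (τ : Equiv.Perm (Fin (n - k))),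
          ¬ (mon (f1 n k hkn') σ + mon (f2 n k hkn') τ = e) := by
        intro σ τ hE
        rw [cond_iff n k hkn' e σ τ] at hE
        obtain ⟨h1, h2⟩ := hE
        set r0 : Fin k := ⟨r.val, hr⟩ with hr0
        have hf1r0 : f1 n k hkn' r0 = r := Fin.ext rfl
        have hv1 : ((σ.symm r0 : Fin k) : ℕ) = s.val - k := by
          have := h1 r0
          rw [hf1r0, he_apply, Equiv.swap_apply_left, hd_apply] at this
          rwa [if_neg (by omega : ¬ s.val < k)] at this
        set q : Fin k := σ.symm r0 with hq
        have hqlt : q.val < k := q.2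
        have hqne : q ≠ r0 := by
          intro hqe
          rw [hqe] at hv1
          simp only [hr0] at hv1
          omega
        have hfq_ne_r : f1 n k hkn' q ≠ r := by
          intro hcon
          apply hqne
          apply Fin.ext
          have : (f1 n k hkn' q).val = q.val := rfl
          rw [← this, hcon]
        have hfq_ne_s : f1 n k hkn' q ≠ s := by
          intro hcon
          have : (f1 n k hkn' q).val = q.val := rfl
          rw [hcon] at this
          omega
        have hfix := h1 q
        rw [he_apply, Equiv.swap_apply_of_ne_of_ne hfq_ne_r hfq_ne_s, hd_apply] at hfix
        have hfqv : (f1 n k hkn' q).val = q.val := rfl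
        rw [hfqv, if_pos hqlt] at hfix
        -- hfix : σ.symm q = q, but σ.symm r0 = q with q ≠ r0
        have hσq : σ.symm q = q := Fin.ext hfix
        exact hqne (σ.symm.injective (hσq.trans hq))
      rw [if_neg hsr]
      simp only [key0, if_false]
      simp
  refine ⟨main, ?_⟩
  rw [coeff_sum]
  have : ∀ p ∈ Finset.univ.filter (fun p : Fin n × Fin n => p.1.val < k ∧ k ≤ p.2.val),
      coeff d (rename (Equiv.swap p.1 p.2) Δpoly)
        = if p.2.val - p.1.val = k then (1 : ℤ) else 0 := by
    intro p hp
    simp only [Finset.mem_filter, Finset.mem_univ, true_and] at hp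
    exact main p.1 p.2 hp.1 hp.2
  rw [Finset.sum_congr rfl this, Finset.sum_boole]
  congr 1
  rw [Finset.filter_filter]
  rw [← Finset.card_range (min k (n - k))]
  refine Finset.card_bij'
    (fun p _ => p.1.val)
    (fun r hr => (⟨r, by simp only [Finset.mem_range] at hr; omega⟩,
      ⟨r + k, by simp only [Finset.mem_range] at hr; omega⟩)) ?_ ?_ ?_ ?_
  · intro p hp
    simp only [Finset.mem_filter, Finset.mem_univ, true_and] at hp
    simp only [Finset.mem_range]
    have := p.2.2
    omega
  · intro r hr
    simp only [Finset.mem_range] at hr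
    simp only [Finset.mem_filter, Finset.mem_univ, true_and, Fin.val_mk]
    omega
  · intro p hp
    simp only [Finset.mem_filter, Finset.mem_univ, true_and] at hp
    obtain ⟨⟨h1, h2⟩, h3⟩ := hp
    apply Prod.ext
    · exact Fin.ext rfl
    · exact Fin.ext (by simp only [Fin.val_mk]; omega)
  · intro r hr
    rfl
end
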